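/- arXiv:2601.08521 — 5 statements merged into one kernel-verified Lean document; each statement's English description precedes it below -/
import Mathlib

section
/- Let G ≥ 2 be an integer and p ∈ (0,1), and set E := (p − p^G)/(1 − (1−p)^G − p^G), the conditional expectation of p̂ given S. Then E > p if and only if p < 1/2, E < p if and only if p > 1/2, and E = p if and only if p = 1/2. Consequently, for the group-relative advantage Â = r − p̂ and true advantage A = r − p (r ∈ {0,1} fixed), E[Â | S] < A when p < 1/2, E[Â | S] > A when p > 1/2, and E[Â | S] = A exactly when p = 1/2. -/
open Finset


lemma binom_total (G : ℕ) (p : ℝ) :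
    ∑ k ∈ Finset.range (G+1), (G.choose k : ℝ) * p ^ k * (1-p) ^ (G-k) = 1 := by
  calc ∑ k ∈ Finset.range (G+1), (G.choose k : ℝ) * p ^ k * (1-p) ^ (G-k)
      = (p + (1-p)) ^ G := by
        rw [add_pow]; exact Finset.sum_congr rfl (fun k _ => by ring)
    _ = 1 := by norm_num

lemma binom_mean (G : ℕ) (p : ℝ) :
    ∑ k ∈ Finset.range (G+1), (k : ℝ) * (G.choose k : ℝ) * p ^ k * (1-p) ^ (G-k)
      = G * p := by
  cases G with
  | zero => simp
  | succ m =>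
    rw [Finset.sum_range_succ']
    have h : ∀ j ∈ Finset.range (m+1),
        ((j+1 : ℕ) : ℝ) * ((m+1).choose (j+1) : ℝ) * p ^ (j+1) * (1-p) ^ (m+1-(j+1))
        = ((m+1 : ℕ) : ℝ) * p * ((m.choose j : ℝ) * p ^ j * (1-p) ^ (m-j)) := by
      intro j _
      have hc : ((m+1) * m.choose j : ℕ) = ((m+1).choose (j+1) * (j+1) : ℕ) :=
        Nat.add_one_mul_choose_eq m j
      have hc' : ((m:ℝ)+1) * (m.choose j : ℝ) = ((m+1).choose (j+1) : ℝ) * ((j:ℝ)+1) := by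
        exact_mod_cast congrArg (Nat.cast : ℕ → ℝ) hc
      have hs : m + 1 - (j+1) = m - j := by omega
      rw [hs, pow_succ]
      push_cast
      linear_combination (-(p ^ j * p * (1 - p) ^ (m - j))) * hc'
    rw [Finset.sum_congr rfl h]
    simp [← Finset.mul_sum, binom_total m p]

lemma sum_Icc_eq_range (G : ℕ) (hG : 1 ≤ G) (g : ℕ → ℝ) :
    ∑ k ∈ Finset.Icc 1 (G-1), g k = (∑ k ∈ Finset.range (G+1), g k) - g 0 - g G := by
  have h1 : G - 1 + 1 = G := by omega
  rw [show Finset.Icc 1 (G-1) = Finset.Ico 1 G by rw [← Finset.Ico_add_one_right_eq_Icc, h1]]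
  have h3 : ∑ k ∈ Finset.Ico 0 (G+1), g k = g 0 + ∑ k ∈ Finset.Ico 1 (G+1), g k :=
    Finset.sum_eq_sum_Ico_succ_bot (by omega) g
  have h4 : ∑ k ∈ Finset.Ico 1 (G+1), g k = (∑ k ∈ Finset.Ico 1 G, g k) + g G :=
    Finset.sum_Ico_succ_top hG g
  rw [Finset.range_eq_Ico, h3, h4]; ring


/-- For `G ≥ 2` and `p ∈ (0,1)`, let `E = (p − p^G)/(1 − (1−p)^G − p^G)` (the conditional
expectation of `p̂` given the non-degenerate event `S`).  Then `E > p ↔ p < 1/2`,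
`E < p ↔ p > 1/2` and `E = p ↔ p = 1/2`.  Consequently, for the group-relative advantage
`Â = r − p̂` with true advantage `A = r − p` (`r ∈ {0,1}` fixed), the conditional
expectation `E[Â | S]` (the ratio of binomial sums over `k = 1,…,G−1` to `P(S)`) is
strictly below `A` when `p < 1/2`, strictly above `A` when `p > 1/2`, and equals `A`
exactly when `p = 1/2`. -/
theorem cond_baseline_bias_sign (G : ℕ) (hG : 2 ≤ G) (p : ℝ)
    (hp : p ∈ Set.Ioo (0 : ℝ) 1)
    (E : ℝ) (hE : E = (p - p ^ G) / (1 - (1 - p) ^ G - p ^ G)) :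
    (E > p ↔ p < 1 / 2) ∧ (E < p ↔ p > 1 / 2) ∧ (E = p ↔ p = 1 / 2) ∧
    ∀ r : ℝ, r = 0 ∨ r = 1 →
      ((p < 1 / 2 →
          (∑ k ∈ Finset.Icc 1 (G - 1),
              (r - (k : ℝ) / G) * (G.choose k : ℝ) * p ^ k * (1 - p) ^ (G - k))
            / (1 - (1 - p) ^ G - p ^ G) < r - p) ∧
       (p > 1 / 2 →
          (∑ k ∈ Finset.Icc 1 (G - 1),
              (r - (k : ℝ) / G) * (G.choose k : ℝ) * p ^ k * (1 - p) ^ (G - k))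
            / (1 - (1 - p) ^ G - p ^ G) > r - p) ∧
       ((∑ k ∈ Finset.Icc 1 (G - 1),
              (r - (k : ℝ) / G) * (G.choose k : ℝ) * p ^ k * (1 - p) ^ (G - k))
            / (1 - (1 - p) ^ G - p ^ G) = r - p ↔ p = 1 / 2)) := by
  obtain ⟨hp0, hp1⟩ := hp
  have hq0 : (0:ℝ) < 1 - p := by linarith
  have hpG : p ^ G < p := by
    have := pow_lt_pow_right_of_lt_one₀ hp0 hp1 (show 1 < G by omega)
    simpa using this
  have hqG : (1-p) ^ G < 1 - p := by
    have := pow_lt_pow_right_of_lt_one₀ hq0 (by linarith) (show 1 < G by omega)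
    simpa using this
  have hD : 0 < 1 - (1 - p) ^ G - p ^ G := by linarith
  have hDne : (1 - (1 - p) ^ G - p ^ G) ≠ 0 := ne_of_gt hD
  have hGg : G - 1 + 1 = G := by omega
  have hpe : p ^ G = p ^ (G-1) * p := by rw [← pow_succ, hGg]
  have hqe : (1-p) ^ G = (1-p) ^ (G-1) * (1-p) := by rw [← pow_succ, hGg]
  have hED : E * (1 - (1 - p) ^ G - p ^ G) = p - p ^ G := by
    rw [hE]; field_simp
  have hkey : (E - p) * (1 - (1 - p) ^ G - p ^ G)
      = p * (1-p) * ((1-p) ^ (G-1) - p ^ (G-1)) := by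
    have h : (E - p) * (1 - (1 - p) ^ G - p ^ G)
        = E * (1 - (1 - p) ^ G - p ^ G) - p * (1 - (1 - p) ^ G - p ^ G) := by ring
    rw [h, hED, hpe, hqe]; ring
  have hn0 : G - 1 ≠ 0 := by omega
  have hlt : p < 1/2 → E > p := by
    intro h
    have hpq : p ^ (G-1) < (1-p) ^ (G-1) :=
      pow_lt_pow_left₀ (by linarith) (le_of_lt hp0) hn0
    have hpos : 0 < (E - p) * (1 - (1 - p) ^ G - p ^ G) := by
      rw [hkey]; exact mul_pos (mul_pos hp0 hq0) (by linarith)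
    nlinarith [hpos, hD]
  have hgt : p > 1/2 → E < p := by
    intro h
    have hpq : (1-p) ^ (G-1) < p ^ (G-1) :=
      pow_lt_pow_left₀ (by linarith) (le_of_lt hq0) hn0
    have hneg : (E - p) * (1 - (1 - p) ^ G - p ^ G) < 0 := by
      rw [hkey]
      exact mul_neg_of_pos_of_neg (mul_pos hp0 hq0) (by linarith)
    nlinarith [hneg, hD]
  have heq : p = 1/2 → E = p := by
    intro h
    have hz : (E - p) * (1 - (1 - p) ^ G - p ^ G) = 0 := by
      rw [hkey, h]; ring_nf
    have := (mul_eq_zero.mp hz).resolve_right hDne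
    linarith
  have i1 : E > p ↔ p < 1/2 := by
    constructor
    · intro h
      rcases lt_trichotomy p (1/2) with h' | h' | h'
      · exact h'
      · exact absurd (heq h') (by intro hh; linarith)
      · exact absurd (hgt h') (by intro hh; linarith)
    · exact hlt
  have i2 : E < p ↔ p > 1/2 := by
    constructor
    · intro h
      rcases lt_trichotomy p (1/2) with h' | h' | h'
      · exact absurd (hlt h') (by intro hh; linarith)
      · exact absurd (heq h') (by intro hh; linarith)
      · exact h'
    · exact hgt
  have i3 : E = p ↔ p = 1/2 := by
    constructor
    · intro h
      rcases lt_trichotomy p (1/2) with h' | h' | h'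
      · exact absurd (hlt h') (by intro hh; linarith)
      · exact h'
      · exact absurd (hgt h') (by intro hh; linarith)
    · exact heq
  refine ⟨i1, i2, i3, ?_⟩
  intro r _
  have hGne : (G : ℝ) ≠ 0 := by positivity
  have hsum : (∑ k ∈ Finset.Icc 1 (G - 1),
      (r - (k : ℝ) / G) * (G.choose k : ℝ) * p ^ k * (1 - p) ^ (G - k))
      = r * (1 - (1 - p) ^ G - p ^ G) - (p - p ^ G) := by
    rw [sum_Icc_eq_range G (by omega)
      (fun k => (r - (k : ℝ) / G) * (G.choose k : ℝ) * p ^ k * (1 - p) ^ (G - k))]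
    have hlin : ∑ k ∈ Finset.range (G+1),
        (r - (k : ℝ) / G) * (G.choose k : ℝ) * p ^ k * (1 - p) ^ (G - k)
        = r * (∑ k ∈ Finset.range (G+1), (G.choose k : ℝ) * p ^ k * (1-p) ^ (G-k))
          - (1 / G) * (∑ k ∈ Finset.range (G+1),
              (k : ℝ) * (G.choose k : ℝ) * p ^ k * (1-p) ^ (G-k)) := by
      rw [Finset.mul_sum, Finset.mul_sum, ← Finset.sum_sub_distrib]
      exact Finset.sum_congr rfl (fun k _ => by ring)
    rw [hlin, binom_total, binom_mean]
    simp only [Nat.choose_zero_right, Nat.choose_self, Nat.cast_one, Nat.cast_zero,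
      pow_zero, Nat.sub_self, Nat.sub_zero, zero_div, one_mul, mul_one]
    field_simp
    ring
  have hratio : (∑ k ∈ Finset.Icc 1 (G - 1),
      (r - (k : ℝ) / G) * (G.choose k : ℝ) * p ^ k * (1 - p) ^ (G - k))
      / (1 - (1 - p) ^ G - p ^ G) = r - E := by
    rw [hsum, hE]
    field_simp
  rw [hratio]
  refine ⟨fun h => by have := hlt h; linarith,
          fun h => by have := hgt h; linarith, ?_⟩
  constructor
  · intro h
    exact i3.mp (by linarith)
  · intro h
    have := heq h; linarith
end

section
/- For an integer G ≥ 2 and p ∈ (0,1), define f(G,p) = (Σ_{k=⌊Gp⌋+1}^{G−1} (G choose k) p^k (1−p)^{G−k}) / (1 − (1−p)^G − p^G), which equals the conditional probability P(p̂ > p | S) of underestimating the advantage. Then for every integer G with 2 ≤ G ≤ 8, the average over a uniformly distributed difficulty on the hard regime satisfies 4 · ∫_0^{1/4} f(G,p) dp > 0.78. -/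
open Finset MeasureTheory

/-- `overshootProb G p` is the conditional probability `P(p̂ > p | S)` that the empirical
baseline of a binomial(G, p) group overestimates `p` given the non-degenerate event
`S = {1 ≤ R ≤ G−1}`, expressed as a ratio of binomial sums:
`(Σ_{k=⌊Gp⌋+1}^{G−1} C(G,k) p^k (1−p)^(G−k)) / (1 − (1−p)^G − p^G)`. -/
noncomputable def overshootProb (G : ℕ) (p : ℝ) : ℝ :=
  (∑ k ∈ Finset.Icc (⌊(G : ℝ) * p⌋₊ + 1) (G - 1),
      (G.choose k : ℝ) * p ^ k * (1 - p) ^ (G - k))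
    / (1 - (1 - p) ^ G - p ^ G)

lemma D_pos {G : ℕ} (hG : 2 ≤ G) {p : ℝ} (h0 : 0 < p) (h1 : p < 1) :
    0 < 1 - (1-p)^G - p^G := by
  have h2 : p ^ G < p := pow_lt_self_of_lt_one₀ h0 h1 (by omega)
  have h3 : (1-p) ^ G ≤ (1-p)^1 := pow_le_pow_of_le_one (by linarith) (by linarith) (by omega)
  simp only [pow_one] at h3
  linarith


lemma auxOP2 : 4 * (∫ p in Set.Ioo (0 : ℝ) (1 / 4), overshootProb 2 p) > 0.78 := by
  have hEq : Set.EqOn (overshootProb 2) (fun _ => (1:ℝ)) (Set.Ioo 0 (1/4)) := by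
    intro p hp
    obtain ⟨h0, h1⟩ := hp
    have hD := D_pos (G := 2) (by norm_num) h0 (by linarith)
    show overshootProb 2 p = 1
    unfold overshootProb
    have hfl : ⌊(2:ℝ) * p⌋₊ = 0 := Nat.floor_eq_zero.2 (by push_cast; linarith)
    push_cast [hfl]
    rw [div_eq_one_iff_eq (by push_cast at hD ⊢; linarith)]
    rw [show Finset.Icc 1 (2-1) = ({1} : Finset ℕ) by decide]
    norm_num [Finset.sum_insert, Finset.mem_insert, Nat.choose]
    ring
  rw [setIntegral_congr_fun measurableSet_Ioo hEq]
  simp [Real.volume_Ioo]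
  norm_num


lemma auxOP3 : 4 * (∫ p in Set.Ioo (0 : ℝ) (1 / 4), overshootProb 3 p) > 0.78 := by
  have hEq : Set.EqOn (overshootProb 3) (fun _ => (1:ℝ)) (Set.Ioo 0 (1/4)) := by
    intro p hp
    obtain ⟨h0, h1⟩ := hp
    have hD := D_pos (G := 3) (by norm_num) h0 (by linarith)
    show overshootProb 3 p = 1
    unfold overshootProb
    have hfl : ⌊(3:ℝ) * p⌋₊ = 0 := Nat.floor_eq_zero.2 (by push_cast; linarith)
    push_cast [hfl]
    rw [div_eq_one_iff_eq (by push_cast at hD ⊢; linarith)]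
    rw [show Finset.Icc 1 (3-1) = ({1,2} : Finset ℕ) by decide]
    norm_num [Finset.sum_insert, Finset.mem_insert, Nat.choose]
    ring
  rw [setIntegral_congr_fun measurableSet_Ioo hEq]
  simp [Real.volume_Ioo]
  norm_num


lemma auxOP4 : 4 * (∫ p in Set.Ioo (0 : ℝ) (1 / 4), overshootProb 4 p) > 0.78 := by
  have hEq : Set.EqOn (overshootProb 4) (fun _ => (1:ℝ)) (Set.Ioo 0 (1/4)) := by
    intro p hp
    obtain ⟨h0, h1⟩ := hp
    have hD := D_pos (G := 4) (by norm_num) h0 (by linarith)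
    show overshootProb 4 p = 1
    unfold overshootProb
    have hfl : ⌊(4:ℝ) * p⌋₊ = 0 := Nat.floor_eq_zero.2 (by push_cast; linarith)
    push_cast [hfl]
    rw [div_eq_one_iff_eq (by push_cast at hD ⊢; linarith)]
    rw [show Finset.Icc 1 (4-1) = ({1,2,3} : Finset ℕ) by decide]
    norm_num [Finset.sum_insert, Finset.mem_insert, Nat.choose]
    ring
  rw [setIntegral_congr_fun measurableSet_Ioo hEq]
  simp [Real.volume_Ioo]
  norm_num


lemma auxOP5 : 4 * (∫ p in Set.Ioo (0 : ℝ) (1 / 4), overshootProb 5 p) > 0.78 := by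
  have hEq1 : Set.EqOn (overshootProb 5) (fun _ => (1:ℝ)) (Set.Ioo 0 (((1 : ℝ)/5))) := by
    intro p hp
    obtain ⟨h0, h1⟩ := hp
    have hD := D_pos (G := 5) (by norm_num) h0 (by linarith)
    show overshootProb 5 p = 1
    unfold overshootProb
    have hfl : ⌊(5:ℝ) * p⌋₊ = 0 := Nat.floor_eq_zero.2 (by push_cast; linarith)
    push_cast [hfl]
    rw [div_eq_one_iff_eq (by push_cast at hD ⊢; linarith)]
    rw [show Finset.Icc 1 (5-1) = ({1,2,3,4} : Finset ℕ) by decide]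
    norm_num [Finset.sum_insert, Finset.mem_insert, Nat.choose]
    ring
  have hEqF : Set.EqOn (overshootProb 5) (fun p : ℝ => 1 - (5*p*(1-p)^4)/(1 - (1-p)^5 - p^5)) (Set.Ico (((1 : ℝ)/5)) (1/4)) := by
    intro p hp
    obtain ⟨h0, h1⟩ := hp
    have hD := D_pos (G := 5) (by norm_num) (by linarith) (by linarith)
    show overshootProb 5 p = 1 - (5*p*(1-p)^4)/(1 - (1-p)^5 - p^5)
    unfold overshootProb
    have hfl : ⌊(5:ℝ) * p⌋₊ = 1 := by
      rw [Nat.floor_eq_iff (by positivity)]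
      push_cast
      constructor <;> nlinarith
    push_cast [hfl]
    have hsum : (∑ k ∈ Finset.Icc (1+1) (5-1), (Nat.choose 5 k : ℝ) * p ^ k * (1 - p) ^ (5 - k))
        = (1 - (1-p)^5 - p^5) - 5*p*(1-p)^4 := by
      rw [show Finset.Icc (1+1) (5-1) = ({2,3,4} : Finset ℕ) by decide]
      norm_num [Finset.sum_insert, Finset.mem_insert, Nat.choose]
      ring
    rw [hsum, sub_div, div_self hD.ne']
  have hkey : ∀ p ∈ Set.Ico (((1 : ℝ)/5)) (1/4), (fun p : ℝ => 1 - (((15671223033 : ℝ)/15665165000) + ((-19452312 : ℝ)/9701539)*p^1 + ((467209 : ℝ)/8135371)*p^2 + ((1232295 : ℝ)/1883029)*p^3 + ((11961363 : ℝ)/5545528)*p^4 + ((-1042891 : ℝ)/528392)*p^5)) p ≤ (fun p : ℝ => 1 - (5*p*(1-p)^4)/(1 - (1-p)^5 - p^5)) p := by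
    intro p hp
    obtain ⟨h0, h1⟩ := hp
    have hD := D_pos (G := 5) (by norm_num) (by linarith) (by linarith)
    have hx : (0:ℝ) ≤ p - ((1 : ℝ)/5) := by linarith
    have hy : (0:ℝ) ≤ (1:ℝ)/4 - p := by linarith
    have hcert : 0 ≤ (((15671223033 : ℝ)/15665165000) + ((-19452312 : ℝ)/9701539)*p^1 + ((467209 : ℝ)/8135371)*p^2 + ((1232295 : ℝ)/1883029)*p^3 + ((11961363 : ℝ)/5545528)*p^4 + ((-1042891 : ℝ)/528392)*p^5)*(1 - (1-p)^5 - p^5) - 5*p*(1-p)^4 := by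
      have hid : (((15671223033 : ℝ)/15665165000) + ((-19452312 : ℝ)/9701539)*p^1 + ((467209 : ℝ)/8135371)*p^2 + ((1232295 : ℝ)/1883029)*p^3 + ((11961363 : ℝ)/5545528)*p^4 + ((-1042891 : ℝ)/528392)*p^5)*(1 - (1-p)^5 - p^5) - 5*p*(1-p)^4
          = ((29339883377995140624366187473942027215267430400 : ℝ)/21318622372925894745971420400409609547)*((p - ((1 : ℝ)/5))^0*((1:ℝ)/4 - p)^10) + ((297852106071452847060276184876923499106637414400 : ℝ)/21318622372925894745971420400409609547)*((p - ((1 : ℝ)/5))^1*((1:ℝ)/4 - p)^9) + ((1359807804920714340299675968682209696920710144000 : ℝ)/21318622372925894745971420400409609547)*((p - ((1 : ℝ)/5))^2*((1:ℝ)/4 - p)^8) + ((3676600372994503262300919440444406250787758080000 : ℝ)/21318622372925894745971420400409609547)*((p - ((1 : ℝ)/5))^3*((1:ℝ)/4 - p)^7) + ((6519793448977084309030357506229531019114956480000 : ℝ)/21318622372925894745971420400409609547)*((p - ((1 : ℝ)/5))^4*((1:ℝ)/4 - p)^6) + ((53178976665841612385184190518395402416223408000 : ℝ)/143078002502858353999808190606775903)*((p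 - ((1 : ℝ)/5))^5*((1:ℝ)/4 - p)^5) + ((6683894202383822834045548188425118935809741972000 : ℝ)/21318622372925894745971420400409609547)*((p - ((1 : ℝ)/5))^6*((1:ℝ)/4 - p)^4) + ((3864204254691783553923500246835282075183749940000 : ℝ)/21318622372925894745971420400409609547)*((p - ((1 : ℝ)/5))^7*((1:ℝ)/4 - p)^3) + ((1465391300090637853571780634050806326270007825000 : ℝ)/21318622372925894745971420400409609547)*((p - ((1 : ℝ)/5))^8*((1:ℝ)/4 - p)^2) + ((658318870400920284694461422443308029492541640625 : ℝ)/42637244745851789491942840800819219094)*((p - ((1 : ℝ)/5))^9*((1:ℝ)/4 - p)^1) + ((66514104836691146905284971515145589022040390625 : ℝ)/42637244745851789491942840800819219094)*((p - ((1 : ℝ)/5))^10*((1:ℝ)/4 - p)^0) := by ring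
      rw [hid]
      repeat' apply add_nonneg
      all_goals exact mul_nonneg (by norm_num) (mul_nonneg (pow_nonneg hx _) (pow_nonneg hy _))
    have h2 : (5*p*(1-p)^4)/(1 - (1-p)^5 - p^5) ≤ ((15671223033 : ℝ)/15665165000) + ((-19452312 : ℝ)/9701539)*p^1 + ((467209 : ℝ)/8135371)*p^2 + ((1232295 : ℝ)/1883029)*p^3 + ((11961363 : ℝ)/5545528)*p^4 + ((-1042891 : ℝ)/528392)*p^5 := by
      rw [div_le_iff₀ hD]
      linarith
    simp only []
    linarith
  have hcontF : ContinuousOn (fun p : ℝ => 1 - (5*p*(1-p)^4)/(1 - (1-p)^5 - p^5)) (Set.Icc (((1 : ℝ)/5)) (1/4)) := by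
    apply ContinuousOn.sub continuousOn_const
    apply ContinuousOn.div (by fun_prop) (by fun_prop)
    intro x hx
    exact (D_pos (G := 5) (by norm_num) (by nlinarith [hx.1]) (by nlinarith [hx.2])).ne'
  have hIntF : IntegrableOn (fun p : ℝ => 1 - (5*p*(1-p)^4)/(1 - (1-p)^5 - p^5)) (Set.Ico (((1 : ℝ)/5)) (1/4)) volume :=
    (hcontF.integrableOn_Icc).mono_set Set.Ico_subset_Icc_self
  have hInt1 : IntegrableOn (overshootProb 5) (Set.Ioo (0:ℝ) (((1 : ℝ)/5))) volume :=
    (integrableOn_const measure_Ioo_lt_top.ne).congr_fun hEq1.symm measurableSet_Ioo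
  have hInt2 : IntegrableOn (overshootProb 5) (Set.Ico (((1 : ℝ)/5)) (1/4)) volume :=
    hIntF.congr_fun hEqF.symm measurableSet_Ico
  have hIntphi : IntegrableOn (fun p : ℝ => 1 - (((15671223033 : ℝ)/15665165000) + ((-19452312 : ℝ)/9701539)*p^1 + ((467209 : ℝ)/8135371)*p^2 + ((1232295 : ℝ)/1883029)*p^3 + ((11961363 : ℝ)/5545528)*p^4 + ((-1042891 : ℝ)/528392)*p^5)) (Set.Ico (((1 : ℝ)/5)) (1/4)) volume :=
    (((by fun_prop : Continuous (fun p : ℝ => 1 - (((15671223033 : ℝ)/15665165000) + ((-19452312 : ℝ)/9701539)*p^1 + ((467209 : ℝ)/8135371)*p^2 + ((1232295 : ℝ)/1883029)*p^3 + ((11961363 : ℝ)/5545528)*p^4 + ((-1042891 : ℝ)/528392)*p^5)))).continuousOn.integrableOn_Icc).mono_set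
      Set.Ico_subset_Icc_self
  have hI1 : ∫ p in Set.Ioo (0:ℝ) (((1 : ℝ)/5)), overshootProb 5 p = ((1 : ℝ)/5) := by
    rw [setIntegral_congr_fun measurableSet_Ioo hEq1]
    simp [Real.volume_Ioo]
    all_goals norm_num
  have hphiInt : ∫ p in Set.Ico (((1 : ℝ)/5)) ((1:ℝ)/4), (fun p : ℝ => 1 - (((15671223033 : ℝ)/15665165000) + ((-19452312 : ℝ)/9701539)*p^1 + ((467209 : ℝ)/8135371)*p^2 + ((1232295 : ℝ)/1883029)*p^3 + ((11961363 : ℝ)/5545528)*p^4 + ((-1042891 : ℝ)/528392)*p^5)) p = ((1427077415191152085854896978198471326952172473 : ℝ)/65490807929628348659624203470058320528384000000) := by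
    rw [setIntegral_congr_set Ico_ae_eq_Ioc,
        ← intervalIntegral.integral_of_le (by norm_num : (((1 : ℝ)/5)) ≤ (1:ℝ)/4)]
    rw [intervalIntegral.integral_eq_sub_of_hasDerivAt (f := fun x : ℝ => x - (((15671223033 : ℝ)/15665165000)*x^1 + ((-9726156 : ℝ)/9701539)*x^2 + ((467209 : ℝ)/24406113)*x^3 + ((1232295 : ℝ)/7532116)*x^4 + ((11961363 : ℝ)/27727640)*x^5 + ((-1042891 : ℝ)/3170352)*x^6)) ?_ ?_]
    · norm_num
    · intro x _
      have h := ((hasDerivAt_id x).sub (((((((hasDerivAt_pow 1 x).const_mul ((15671223033 : ℝ)/15665165000)).add ((hasDerivAt_pow 2 x).const_mul ((-9726156 : ℝ)/9701539))).add ((hasDerivAt_pow 3 x).const_mul ((467209 : ℝ)/24406113))).add ((hasDerivAt_pow 4 x).const_mul ((1232295 : ℝ)/7532116))).add ((hasDerivAt_pow 5 x).const_mul ((11961363 : ℝ)/27727640))).add ((hasDerivAt_pow 6 x).const_mul ((-1042891 : ℝ)/3170352))))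
      refine h.congr_deriv ?_
      push_cast
      ring
    · exact Continuous.intervalIntegrable (by fun_prop) _ _
  have hmono : ∫ p in Set.Ico (((1 : ℝ)/5)) ((1:ℝ)/4), (fun p : ℝ => 1 - (((15671223033 : ℝ)/15665165000) + ((-19452312 : ℝ)/9701539)*p^1 + ((467209 : ℝ)/8135371)*p^2 + ((1232295 : ℝ)/1883029)*p^3 + ((11961363 : ℝ)/5545528)*p^4 + ((-1042891 : ℝ)/528392)*p^5)) p
      ≤ ∫ p in Set.Ico (((1 : ℝ)/5)) ((1:ℝ)/4), (fun p : ℝ => 1 - (5*p*(1-p)^4)/(1 - (1-p)^5 - p^5)) p :=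
    setIntegral_mono_on hIntphi hIntF measurableSet_Ico hkey
  have hI2 : ∫ p in Set.Ico (((1 : ℝ)/5)) ((1:ℝ)/4), overshootProb 5 p ≥ ((1427077415191152085854896978198471326952172473 : ℝ)/65490807929628348659624203470058320528384000000) := by
    rw [setIntegral_congr_fun measurableSet_Ico hEqF]
    rw [hphiInt] at hmono
    exact hmono
  have hdisj : Disjoint (Set.Ioo (0:ℝ) (((1 : ℝ)/5))) (Set.Ico (((1 : ℝ)/5)) (1/4)) := by
    rw [Set.disjoint_left]
    rintro x ⟨_, h2⟩ ⟨h3, _⟩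
    linarith
  have hsplit : ∫ p in Set.Ioo (0:ℝ) (1/4), overshootProb 5 p
      = (∫ p in Set.Ioo (0:ℝ) (((1 : ℝ)/5)), overshootProb 5 p)
        + ∫ p in Set.Ico (((1 : ℝ)/5)) ((1:ℝ)/4), overshootProb 5 p := by
    rw [← setIntegral_union hdisj measurableSet_Ico hInt1 hInt2,
        Set.Ioo_union_Ico_eq_Ioo (by norm_num) (by norm_num)]
  rw [hsplit, hI1]
  have : (((1 : ℝ)/5) : ℝ) + ((1427077415191152085854896978198471326952172473 : ℝ)/65490807929628348659624203470058320528384000000) > 0.78 / 4 := by norm_num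
  linarith


lemma auxOP6 : 4 * (∫ p in Set.Ioo (0 : ℝ) (1 / 4), overshootProb 6 p) > 0.78 := by
  have hEq1 : Set.EqOn (overshootProb 6) (fun _ => (1:ℝ)) (Set.Ioo 0 (((1 : ℝ)/6))) := by
    intro p hp
    obtain ⟨h0, h1⟩ := hp
    have hD := D_pos (G := 6) (by norm_num) h0 (by linarith)
    show overshootProb 6 p = 1
    unfold overshootProb
    have hfl : ⌊(6:ℝ) * p⌋₊ = 0 := Nat.floor_eq_zero.2 (by push_cast; linarith)
    push_cast [hfl]
    rw [div_eq_one_iff_eq (by push_cast at hD ⊢; linarith)]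
    rw [show Finset.Icc 1 (6-1) = ({1,2,3,4,5} : Finset ℕ) by decide]
    norm_num [Finset.sum_insert, Finset.mem_insert, Nat.choose]
    ring
  have hEqF : Set.EqOn (overshootProb 6) (fun p : ℝ => 1 - (6*p*(1-p)^5)/(1 - (1-p)^6 - p^6)) (Set.Ico (((1 : ℝ)/6)) (1/4)) := by
    intro p hp
    obtain ⟨h0, h1⟩ := hp
    have hD := D_pos (G := 6) (by norm_num) (by linarith) (by linarith)
    show overshootProb 6 p = 1 - (6*p*(1-p)^5)/(1 - (1-p)^6 - p^6)
    unfold overshootProb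
    have hfl : ⌊(6:ℝ) * p⌋₊ = 1 := by
      rw [Nat.floor_eq_iff (by positivity)]
      push_cast
      constructor <;> nlinarith
    push_cast [hfl]
    have hsum : (∑ k ∈ Finset.Icc (1+1) (6-1), (Nat.choose 6 k : ℝ) * p ^ k * (1 - p) ^ (6 - k))
        = (1 - (1-p)^6 - p^6) - 6*p*(1-p)^5 := by
      rw [show Finset.Icc (1+1) (6-1) = ({2,3,4,5} : Finset ℕ) by decide]
      norm_num [Finset.sum_insert, Finset.mem_insert, Nat.choose]
      ring
    rw [hsum, sub_div, div_self hD.ne']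
  have hkey : ∀ p ∈ Set.Ico (((1 : ℝ)/6)) (1/4), (fun p : ℝ => 1 - (((10407855889 : ℝ)/10404445000) + ((-18210034 : ℝ)/7272603)*p^1 + ((3499811 : ℝ)/7494349)*p^2 + ((7039796 : ℝ)/4603891)*p^3 + ((23428369 : ℝ)/9804261)*p^4 + ((-8364131 : ℝ)/2398307)*p^5)) p ≤ (fun p : ℝ => 1 - (6*p*(1-p)^5)/(1 - (1-p)^6 - p^6)) p := by
    intro p hp
    obtain ⟨h0, h1⟩ := hp
    have hD := D_pos (G := 6) (by norm_num) (by linarith) (by linarith)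
    have hx : (0:ℝ) ≤ p - ((1 : ℝ)/6) := by linarith
    have hy : (0:ℝ) ≤ (1:ℝ)/4 - p := by linarith
    have hcert : 0 ≤ (((10407855889 : ℝ)/10404445000) + ((-18210034 : ℝ)/7272603)*p^1 + ((3499811 : ℝ)/7494349)*p^2 + ((7039796 : ℝ)/4603891)*p^3 + ((23428369 : ℝ)/9804261)*p^4 + ((-8364131 : ℝ)/2398307)*p^5)*(1 - (1-p)^6 - p^6) - 6*p*(1-p)^5 := by
      have hid : (((10407855889 : ℝ)/10404445000) + ((-18210034 : ℝ)/7272603)*p^1 + ((3499811 : ℝ)/7494349)*p^2 + ((7039796 : ℝ)/4603891)*p^3 + ((23428369 : ℝ)/9804261)*p^4 + ((-8364131 : ℝ)/2398307)*p^5)*(1 - (1-p)^6 - p^6) - 6*p*(1-p)^5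
          = ((5617744961103642817486039382669004907717560823808 : ℝ)/56841251279206696140998510541314809394125)*((p - ((1 : ℝ)/6))^0*((1:ℝ)/4 - p)^11) + ((317457685174355552041288555748622027333409818638336 : ℝ)/284206256396033480704992552706574046970625)*((p - ((1 : ℝ)/6))^1*((1:ℝ)/4 - p)^10) + ((25039914174755388339194324955726181319065673690112 : ℝ)/4372403944554361241615270041639600722625)*((p - ((1 : ℝ)/6))^2*((1:ℝ)/4 - p)^9) + ((999515846620826833580567367930222077054149118793216 : ℝ)/56841251279206696140998510541314809394125)*((p - ((1 : ℝ)/6))^3*((1:ℝ)/4 - p)^8) + ((157123596661581930950709452052810974065173105590784 : ℝ)/4372403944554361241615270041639600722625)*((p - ((1 : ℝ)/6))^4*((1:ℝ)/4 - p)^7) + ((14587686203219276998181123753536004812019759457021696 : ℝ)/284206256396033480704992552706574046970625)*((p - ((1 : ℝ)/6))^5*((1:ℝ)/4 - p)^6) + ((14862306620244745364856222373065899232756688085779584 : ℝ)/284206256396033480704992552706574046970625)*((p - ((1 : ℝ)/6))^6*((1:ℝ)/4 - p)^5) + ((432079017215097308304890562154362536008987084084416 : ℝ)/11368250255841339228199702108262961878825)*((p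 - ((1 : ℝ)/6))^7*((1:ℝ)/4 - p)^4) + ((1097830267582505942264334181365300103314704034256752 : ℝ)/56841251279206696140998510541314809394125)*((p - ((1 : ℝ)/6))^8*((1:ℝ)/4 - p)^3) + ((371509997510636905174264891514883703313431998975672 : ℝ)/56841251279206696140998510541314809394125)*((p - ((1 : ℝ)/6))^9*((1:ℝ)/4 - p)^2) + ((376780227382418602475145967615956258334698439447116 : ℝ)/284206256396033480704992552706574046970625)*((p - ((1 : ℝ)/6))^10*((1:ℝ)/4 - p)^1) + ((34706577261100708517864033800304791859778262334118 : ℝ)/284206256396033480704992552706574046970625)*((p - ((1 : ℝ)/6))^11*((1:ℝ)/4 - p)^0) := by ring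
      rw [hid]
      repeat' apply add_nonneg
      all_goals exact mul_nonneg (by norm_num) (mul_nonneg (pow_nonneg hx _) (pow_nonneg hy _))
    have h2 : (6*p*(1-p)^5)/(1 - (1-p)^6 - p^6) ≤ ((10407855889 : ℝ)/10404445000) + ((-18210034 : ℝ)/7272603)*p^1 + ((3499811 : ℝ)/7494349)*p^2 + ((7039796 : ℝ)/4603891)*p^3 + ((23428369 : ℝ)/9804261)*p^4 + ((-8364131 : ℝ)/2398307)*p^5 := by
      rw [div_le_iff₀ hD]
      linarith
    simp only []
    linarith
  have hcontF : ContinuousOn (fun p : ℝ => 1 - (6*p*(1-p)^5)/(1 - (1-p)^6 - p^6)) (Set.Icc (((1 : ℝ)/6)) (1/4)) := by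
    apply ContinuousOn.sub continuousOn_const
    apply ContinuousOn.div (by fun_prop) (by fun_prop)
    intro x hx
    exact (D_pos (G := 6) (by norm_num) (by nlinarith [hx.1]) (by nlinarith [hx.2])).ne'
  have hIntF : IntegrableOn (fun p : ℝ => 1 - (6*p*(1-p)^5)/(1 - (1-p)^6 - p^6)) (Set.Ico (((1 : ℝ)/6)) (1/4)) volume :=
    (hcontF.integrableOn_Icc).mono_set Set.Ico_subset_Icc_self
  have hInt1 : IntegrableOn (overshootProb 6) (Set.Ioo (0:ℝ) (((1 : ℝ)/6))) volume :=
    (integrableOn_const measure_Ioo_lt_top.ne).congr_fun hEq1.symm measurableSet_Ioo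
  have hInt2 : IntegrableOn (overshootProb 6) (Set.Ico (((1 : ℝ)/6)) (1/4)) volume :=
    hIntF.congr_fun hEqF.symm measurableSet_Ico
  have hIntphi : IntegrableOn (fun p : ℝ => 1 - (((10407855889 : ℝ)/10404445000) + ((-18210034 : ℝ)/7272603)*p^1 + ((3499811 : ℝ)/7494349)*p^2 + ((7039796 : ℝ)/4603891)*p^3 + ((23428369 : ℝ)/9804261)*p^4 + ((-8364131 : ℝ)/2398307)*p^5)) (Set.Ico (((1 : ℝ)/6)) (1/4)) volume :=
    (((by fun_prop : Continuous (fun p : ℝ => 1 - (((10407855889 : ℝ)/10404445000) + ((-18210034 : ℝ)/7272603)*p^1 + ((3499811 : ℝ)/7494349)*p^2 + ((7039796 : ℝ)/4603891)*p^3 + ((23428369 : ℝ)/9804261)*p^4 + ((-8364131 : ℝ)/2398307)*p^5)))).continuousOn.integrableOn_Icc).mono_set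
      Set.Ico_subset_Icc_self
  have hI1 : ∫ p in Set.Ioo (0:ℝ) (((1 : ℝ)/6)), overshootProb 6 p = ((1 : ℝ)/6) := by
    rw [setIntegral_congr_fun measurableSet_Ioo hEq1]
    simp [Real.volume_Ioo]
    all_goals norm_num
  have hphiInt : ∫ p in Set.Ico (((1 : ℝ)/6)) ((1:ℝ)/4), (fun p : ℝ => 1 - (((10407855889 : ℝ)/10404445000) + ((-18210034 : ℝ)/7272603)*p^1 + ((3499811 : ℝ)/7494349)*p^2 + ((7039796 : ℝ)/4603891)*p^3 + ((23428369 : ℝ)/9804261)*p^4 + ((-8364131 : ℝ)/2398307)*p^5)) p = ((204985475050445288205650710347627538376136829153 : ℝ)/5091812005790721821096498895005920794417208320000) := by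
    rw [setIntegral_congr_set Ico_ae_eq_Ioc,
        ← intervalIntegral.integral_of_le (by norm_num : (((1 : ℝ)/6)) ≤ (1:ℝ)/4)]
    rw [intervalIntegral.integral_eq_sub_of_hasDerivAt (f := fun x : ℝ => x - (((10407855889 : ℝ)/10404445000)*x^1 + ((-9105017 : ℝ)/7272603)*x^2 + ((3499811 : ℝ)/22483047)*x^3 + ((1759949 : ℝ)/4603891)*x^4 + ((23428369 : ℝ)/49021305)*x^5 + ((-8364131 : ℝ)/14389842)*x^6)) ?_ ?_]
    · norm_num
    · intro x _
      have h := ((hasDerivAt_id x).sub (((((((hasDerivAt_pow 1 x).const_mul ((10407855889 : ℝ)/10404445000)).add ((hasDerivAt_pow 2 x).const_mul ((-9105017 : ℝ)/7272603))).add ((hasDerivAt_pow 3 x).const_mul ((3499811 : ℝ)/22483047))).add ((hasDerivAt_pow 4 x).const_mul ((1759949 : ℝ)/4603891))).add ((hasDerivAt_pow 5 x).const_mul ((23428369 : ℝ)/49021305))).add ((hasDerivAt_pow 6 x).const_mul ((-8364131 : ℝ)/14389842))))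
      refine h.congr_deriv ?_
      push_cast
      ring
    · exact Continuous.intervalIntegrable (by fun_prop) _ _
  have hmono : ∫ p in Set.Ico (((1 : ℝ)/6)) ((1:ℝ)/4), (fun p : ℝ => 1 - (((10407855889 : ℝ)/10404445000) + ((-18210034 : ℝ)/7272603)*p^1 + ((3499811 : ℝ)/7494349)*p^2 + ((7039796 : ℝ)/4603891)*p^3 + ((23428369 : ℝ)/9804261)*p^4 + ((-8364131 : ℝ)/2398307)*p^5)) p
      ≤ ∫ p in Set.Ico (((1 : ℝ)/6)) ((1:ℝ)/4), (fun p : ℝ => 1 - (6*p*(1-p)^5)/(1 - (1-p)^6 - p^6)) p :=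
    setIntegral_mono_on hIntphi hIntF measurableSet_Ico hkey
  have hI2 : ∫ p in Set.Ico (((1 : ℝ)/6)) ((1:ℝ)/4), overshootProb 6 p ≥ ((204985475050445288205650710347627538376136829153 : ℝ)/5091812005790721821096498895005920794417208320000) := by
    rw [setIntegral_congr_fun measurableSet_Ico hEqF]
    rw [hphiInt] at hmono
    exact hmono
  have hdisj : Disjoint (Set.Ioo (0:ℝ) (((1 : ℝ)/6))) (Set.Ico (((1 : ℝ)/6)) (1/4)) := by
    rw [Set.disjoint_left]
    rintro x ⟨_, h2⟩ ⟨h3, _⟩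
    linarith
  have hsplit : ∫ p in Set.Ioo (0:ℝ) (1/4), overshootProb 6 p
      = (∫ p in Set.Ioo (0:ℝ) (((1 : ℝ)/6)), overshootProb 6 p)
        + ∫ p in Set.Ico (((1 : ℝ)/6)) ((1:ℝ)/4), overshootProb 6 p := by
    rw [← setIntegral_union hdisj measurableSet_Ico hInt1 hInt2,
        Set.Ioo_union_Ico_eq_Ioo (by norm_num) (by norm_num)]
  rw [hsplit, hI1]
  have : (((1 : ℝ)/6) : ℝ) + ((204985475050445288205650710347627538376136829153 : ℝ)/5091812005790721821096498895005920794417208320000) > 0.78 / 4 := by norm_num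
  linarith


lemma auxOP7 : 4 * (∫ p in Set.Ioo (0 : ℝ) (1 / 4), overshootProb 7 p) > 0.78 := by
  have hEq1 : Set.EqOn (overshootProb 7) (fun _ => (1:ℝ)) (Set.Ioo 0 (((1 : ℝ)/7))) := by
    intro p hp
    obtain ⟨h0, h1⟩ := hp
    have hD := D_pos (G := 7) (by norm_num) h0 (by linarith)
    show overshootProb 7 p = 1
    unfold overshootProb
    have hfl : ⌊(7:ℝ) * p⌋₊ = 0 := Nat.floor_eq_zero.2 (by push_cast; linarith)
    push_cast [hfl]
    rw [div_eq_one_iff_eq (by push_cast at hD ⊢; linarith)]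
    rw [show Finset.Icc 1 (7-1) = ({1,2,3,4,5,6} : Finset ℕ) by decide]
    norm_num [Finset.sum_insert, Finset.mem_insert, Nat.choose]
    ring
  have hEqF : Set.EqOn (overshootProb 7) (fun p : ℝ => 1 - (7*p*(1-p)^6)/(1 - (1-p)^7 - p^7)) (Set.Ico (((1 : ℝ)/7)) (1/4)) := by
    intro p hp
    obtain ⟨h0, h1⟩ := hp
    have hD := D_pos (G := 7) (by norm_num) (by linarith) (by linarith)
    show overshootProb 7 p = 1 - (7*p*(1-p)^6)/(1 - (1-p)^7 - p^7)
    unfold overshootProb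
    have hfl : ⌊(7:ℝ) * p⌋₊ = 1 := by
      rw [Nat.floor_eq_iff (by positivity)]
      push_cast
      constructor <;> nlinarith
    push_cast [hfl]
    have hsum : (∑ k ∈ Finset.Icc (1+1) (7-1), (Nat.choose 7 k : ℝ) * p ^ k * (1 - p) ^ (7 - k))
        = (1 - (1-p)^7 - p^7) - 7*p*(1-p)^6 := by
      rw [show Finset.Icc (1+1) (7-1) = ({2,3,4,5,6} : Finset ℕ) by decide]
      norm_num [Finset.sum_insert, Finset.mem_insert, Nat.choose]
      ring
    rw [hsum, sub_div, div_self hD.ne']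
  have hkey : ∀ p ∈ Set.Ico (((1 : ℝ)/7)) (1/4), (fun p : ℝ => 1 - (((3552445397 : ℝ)/3551985000) + ((-14273457 : ℝ)/4760725)*p^1 + ((3232625 : ℝ)/3288019)*p^2 + ((20222691 : ℝ)/6638863)*p^3 + ((11778561 : ℝ)/9519085)*p^4 + ((-7346824 : ℝ)/1495993)*p^5)) p ≤ (fun p : ℝ => 1 - (7*p*(1-p)^6)/(1 - (1-p)^7 - p^7)) p := by
    intro p hp
    obtain ⟨h0, h1⟩ := hp
    have hD := D_pos (G := 7) (by norm_num) (by linarith) (by linarith)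
    have hx : (0:ℝ) ≤ p - ((1 : ℝ)/7) := by linarith
    have hy : (0:ℝ) ≤ (1:ℝ)/4 - p := by linarith
    have hcert : 0 ≤ (((3552445397 : ℝ)/3551985000) + ((-14273457 : ℝ)/4760725)*p^1 + ((3232625 : ℝ)/3288019)*p^2 + ((20222691 : ℝ)/6638863)*p^3 + ((11778561 : ℝ)/9519085)*p^4 + ((-7346824 : ℝ)/1495993)*p^5)*(1 - (1-p)^7 - p^7) - 7*p*(1-p)^6 := by
      have hid : (((3552445397 : ℝ)/3551985000) + ((-14273457 : ℝ)/4760725)*p^1 + ((3232625 : ℝ)/3288019)*p^2 + ((20222691 : ℝ)/6638863)*p^3 + ((11778561 : ℝ)/9519085)*p^4 + ((-7346824 : ℝ)/1495993)*p^5)*(1 - (1-p)^7 - p^7) - 7*p*(1-p)^6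
          = ((156603611851249188477105412801353580005878803726336 : ℝ)/2714792819029674370750739368845478748930625)*((p - ((1 : ℝ)/7))^0*((1:ℝ)/4 - p)^12) + ((1949914328911472553535096731407015048750467817930752 : ℝ)/2714792819029674370750739368845478748930625)*((p - ((1 : ℝ)/7))^1*((1:ℝ)/4 - p)^11) + ((11085574353779112348297844136424476343305031071694848 : ℝ)/2714792819029674370750739368845478748930625)*((p - ((1 : ℝ)/7))^2*((1:ℝ)/4 - p)^10) + ((7614624404965440082029390386248494214710074289061888 : ℝ)/542958563805934874150147873769095749786125)*((p - ((1 : ℝ)/7))^3*((1:ℝ)/4 - p)^9) + ((5867845002528257626910023302127251302326428244975616 : ℝ)/180986187935311624716715957923031916595375)*((p - ((1 : ℝ)/7))^4*((1:ℝ)/4 - p)^8) + ((48112341954856198157480494709041510625834722542946304 : ℝ)/904930939676558123583579789615159582976875)*((p - ((1 : ℝ)/7))^5*((1:ℝ)/4 - p)^7) + ((19133210559116185397985556932986165029380601590364672 : ℝ)/301643646558852707861193263205053194325625)*((p - ((1 : ℝ)/7))^6*((1:ℝ)/4 - p)^6) + ((10041635566512945123194360608440092092130246234513408 : ℝ)/180986187935311624716715957923031916595375)*((p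 - ((1 : ℝ)/7))^7*((1:ℝ)/4 - p)^5) + ((1278576544197332047654034712638905959730654771836416 : ℝ)/36197237587062324943343191584606383319075)*((p - ((1 : ℝ)/7))^8*((1:ℝ)/4 - p)^4) + ((8668630167560530024368948166405894324458349426252544 : ℝ)/542958563805934874150147873769095749786125)*((p - ((1 : ℝ)/7))^9*((1:ℝ)/4 - p)^3) + ((121151763617339443019418084540115123076986624610704 : ℝ)/24906356137886920832575590539866777513125)*((p - ((1 : ℝ)/7))^10*((1:ℝ)/4 - p)^2) + ((2435349079167643038026469178822838686356767177839616 : ℝ)/2714792819029674370750739368845478748930625)*((p - ((1 : ℝ)/7))^11*((1:ℝ)/4 - p)^1) + ((205564548281940058445665786427129572583816885247152 : ℝ)/2714792819029674370750739368845478748930625)*((p - ((1 : ℝ)/7))^12*((1:ℝ)/4 - p)^0) := by ring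
      rw [hid]
      repeat' apply add_nonneg
      all_goals exact mul_nonneg (by norm_num) (mul_nonneg (pow_nonneg hx _) (pow_nonneg hy _))
    have h2 : (7*p*(1-p)^6)/(1 - (1-p)^7 - p^7) ≤ ((3552445397 : ℝ)/3551985000) + ((-14273457 : ℝ)/4760725)*p^1 + ((3232625 : ℝ)/3288019)*p^2 + ((20222691 : ℝ)/6638863)*p^3 + ((11778561 : ℝ)/9519085)*p^4 + ((-7346824 : ℝ)/1495993)*p^5 := by
      rw [div_le_iff₀ hD]
      linarith
    simp only []
    linarith
  have hcontF : ContinuousOn (fun p : ℝ => 1 - (7*p*(1-p)^6)/(1 - (1-p)^7 - p^7)) (Set.Icc (((1 : ℝ)/7)) (1/4)) := by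
    apply ContinuousOn.sub continuousOn_const
    apply ContinuousOn.div (by fun_prop) (by fun_prop)
    intro x hx
    exact (D_pos (G := 7) (by norm_num) (by nlinarith [hx.1]) (by nlinarith [hx.2])).ne'
  have hIntF : IntegrableOn (fun p : ℝ => 1 - (7*p*(1-p)^6)/(1 - (1-p)^7 - p^7)) (Set.Ico (((1 : ℝ)/7)) (1/4)) volume :=
    (hcontF.integrableOn_Icc).mono_set Set.Ico_subset_Icc_self
  have hInt1 : IntegrableOn (overshootProb 7) (Set.Ioo (0:ℝ) (((1 : ℝ)/7))) volume :=
    (integrableOn_const measure_Ioo_lt_top.ne).congr_fun hEq1.symm measurableSet_Ioo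
  have hInt2 : IntegrableOn (overshootProb 7) (Set.Ico (((1 : ℝ)/7)) (1/4)) volume :=
    hIntF.congr_fun hEqF.symm measurableSet_Ico
  have hIntphi : IntegrableOn (fun p : ℝ => 1 - (((3552445397 : ℝ)/3551985000) + ((-14273457 : ℝ)/4760725)*p^1 + ((3232625 : ℝ)/3288019)*p^2 + ((20222691 : ℝ)/6638863)*p^3 + ((11778561 : ℝ)/9519085)*p^4 + ((-7346824 : ℝ)/1495993)*p^5)) (Set.Ico (((1 : ℝ)/7)) (1/4)) volume :=
    (((by fun_prop : Continuous (fun p : ℝ => 1 - (((3552445397 : ℝ)/3551985000) + ((-14273457 : ℝ)/4760725)*p^1 + ((3232625 : ℝ)/3288019)*p^2 + ((20222691 : ℝ)/6638863)*p^3 + ((11778561 : ℝ)/9519085)*p^4 + ((-7346824 : ℝ)/1495993)*p^5)))).continuousOn.integrableOn_Icc).mono_set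
      Set.Ico_subset_Icc_self
  have hI1 : ∫ p in Set.Ioo (0:ℝ) (((1 : ℝ)/7)), overshootProb 7 p = ((1 : ℝ)/7) := by
    rw [setIntegral_congr_fun measurableSet_Ioo hEq1]
    simp [Real.volume_Ioo]
    all_goals norm_num
  have hphiInt : ∫ p in Set.Ico (((1 : ℝ)/7)) ((1:ℝ)/4), (fun p : ℝ => 1 - (((3552445397 : ℝ)/3551985000) + ((-14273457 : ℝ)/4760725)*p^1 + ((3232625 : ℝ)/3288019)*p^2 + ((20222691 : ℝ)/6638863)*p^3 + ((11778561 : ℝ)/9519085)*p^4 + ((-7346824 : ℝ)/1495993)*p^5)) p = ((64200449616711195271438534468540611822383 : ℝ)/1141776412004687447578233832848005592960000) := by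
    rw [setIntegral_congr_set Ico_ae_eq_Ioc,
        ← intervalIntegral.integral_of_le (by norm_num : (((1 : ℝ)/7)) ≤ (1:ℝ)/4)]
    rw [intervalIntegral.integral_eq_sub_of_hasDerivAt (f := fun x : ℝ => x - (((3552445397 : ℝ)/3551985000)*x^1 + ((-14273457 : ℝ)/9521450)*x^2 + ((3232625 : ℝ)/9864057)*x^3 + ((20222691 : ℝ)/26555452)*x^4 + ((11778561 : ℝ)/47595425)*x^5 + ((-3673412 : ℝ)/4487979)*x^6)) ?_ ?_]
    · norm_num
    · intro x _
      have h := ((hasDerivAt_id x).sub (((((((hasDerivAt_pow 1 x).const_mul ((3552445397 : ℝ)/3551985000)).add ((hasDerivAt_pow 2 x).const_mul ((-14273457 : ℝ)/9521450))).add ((hasDerivAt_pow 3 x).const_mul ((3232625 : ℝ)/9864057))).add ((hasDerivAt_pow 4 x).const_mul ((20222691 : ℝ)/26555452))).add ((hasDerivAt_pow 5 x).const_mul ((11778561 : ℝ)/47595425))).add ((hasDerivAt_pow 6 x).const_mul ((-3673412 : ℝ)/4487979))))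
      refine h.congr_deriv ?_
      push_cast
      ring
    · exact Continuous.intervalIntegrable (by fun_prop) _ _
  have hmono : ∫ p in Set.Ico (((1 : ℝ)/7)) ((1:ℝ)/4), (fun p : ℝ => 1 - (((3552445397 : ℝ)/3551985000) + ((-14273457 : ℝ)/4760725)*p^1 + ((3232625 : ℝ)/3288019)*p^2 + ((20222691 : ℝ)/6638863)*p^3 + ((11778561 : ℝ)/9519085)*p^4 + ((-7346824 : ℝ)/1495993)*p^5)) p
      ≤ ∫ p in Set.Ico (((1 : ℝ)/7)) ((1:ℝ)/4), (fun p : ℝ => 1 - (7*p*(1-p)^6)/(1 - (1-p)^7 - p^7)) p :=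
    setIntegral_mono_on hIntphi hIntF measurableSet_Ico hkey
  have hI2 : ∫ p in Set.Ico (((1 : ℝ)/7)) ((1:ℝ)/4), overshootProb 7 p ≥ ((64200449616711195271438534468540611822383 : ℝ)/1141776412004687447578233832848005592960000) := by
    rw [setIntegral_congr_fun measurableSet_Ico hEqF]
    rw [hphiInt] at hmono
    exact hmono
  have hdisj : Disjoint (Set.Ioo (0:ℝ) (((1 : ℝ)/7))) (Set.Ico (((1 : ℝ)/7)) (1/4)) := by
    rw [Set.disjoint_left]
    rintro x ⟨_, h2⟩ ⟨h3, _⟩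
    linarith
  have hsplit : ∫ p in Set.Ioo (0:ℝ) (1/4), overshootProb 7 p
      = (∫ p in Set.Ioo (0:ℝ) (((1 : ℝ)/7)), overshootProb 7 p)
        + ∫ p in Set.Ico (((1 : ℝ)/7)) ((1:ℝ)/4), overshootProb 7 p := by
    rw [← setIntegral_union hdisj measurableSet_Ico hInt1 hInt2,
        Set.Ioo_union_Ico_eq_Ioo (by norm_num) (by norm_num)]
  rw [hsplit, hI1]
  have : (((1 : ℝ)/7) : ℝ) + ((64200449616711195271438534468540611822383 : ℝ)/1141776412004687447578233832848005592960000) > 0.78 / 4 := by norm_num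
  linarith


lemma auxOP8 : 4 * (∫ p in Set.Ioo (0 : ℝ) (1 / 4), overshootProb 8 p) > 0.78 := by
  have hEq1 : Set.EqOn (overshootProb 8) (fun _ => (1:ℝ)) (Set.Ioo 0 (((1 : ℝ)/8))) := by
    intro p hp
    obtain ⟨h0, h1⟩ := hp
    have hD := D_pos (G := 8) (by norm_num) h0 (by linarith)
    show overshootProb 8 p = 1
    unfold overshootProb
    have hfl : ⌊(8:ℝ) * p⌋₊ = 0 := Nat.floor_eq_zero.2 (by push_cast; linarith)
    push_cast [hfl]
    rw [div_eq_one_iff_eq (by push_cast at hD ⊢; linarith)]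
    rw [show Finset.Icc 1 (8-1) = ({1,2,3,4,5,6,7} : Finset ℕ) by decide]
    norm_num [Finset.sum_insert, Finset.mem_insert, Nat.choose]
    ring
  have hEqF : Set.EqOn (overshootProb 8) (fun p : ℝ => 1 - (8*p*(1-p)^7)/(1 - (1-p)^8 - p^8)) (Set.Ico (((1 : ℝ)/8)) (1/4)) := by
    intro p hp
    obtain ⟨h0, h1⟩ := hp
    have hD := D_pos (G := 8) (by norm_num) (by linarith) (by linarith)
    show overshootProb 8 p = 1 - (8*p*(1-p)^7)/(1 - (1-p)^8 - p^8)
    unfold overshootProb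
    have hfl : ⌊(8:ℝ) * p⌋₊ = 1 := by
      rw [Nat.floor_eq_iff (by positivity)]
      push_cast
      constructor <;> nlinarith
    push_cast [hfl]
    have hsum : (∑ k ∈ Finset.Icc (1+1) (8-1), (Nat.choose 8 k : ℝ) * p ^ k * (1 - p) ^ (8 - k))
        = (1 - (1-p)^8 - p^8) - 8*p*(1-p)^7 := by
      rw [show Finset.Icc (1+1) (8-1) = ({2,3,4,5,6,7} : Finset ℕ) by decide]
      norm_num [Finset.sum_insert, Finset.mem_insert, Nat.choose]
      ring
    rw [hsum, sub_div, div_self hD.ne']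
  have hkey : ∀ p ∈ Set.Ico (((1 : ℝ)/8)) (1/4), (fun p : ℝ => 1 - (((44530142213 : ℝ)/44536065000) + ((-29606933 : ℝ)/8484926)*p^1 + ((9813263 : ℝ)/6078635)*p^2 + ((15389949 : ℝ)/2943425)*p^3 + ((-3733958 : ℝ)/1787199)*p^4 + ((-21138309 : ℝ)/4056146)*p^5)) p ≤ (fun p : ℝ => 1 - (8*p*(1-p)^7)/(1 - (1-p)^8 - p^8)) p := by
    intro p hp
    obtain ⟨h0, h1⟩ := hp
    have hD := D_pos (G := 8) (by norm_num) (by linarith) (by linarith)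
    have hx : (0:ℝ) ≤ p - ((1 : ℝ)/8) := by linarith
    have hy : (0:ℝ) ≤ (1:ℝ)/4 - p := by linarith
    have hcert : 0 ≤ (((44530142213 : ℝ)/44536065000) + ((-29606933 : ℝ)/8484926)*p^1 + ((9813263 : ℝ)/6078635)*p^2 + ((15389949 : ℝ)/2943425)*p^3 + ((-3733958 : ℝ)/1787199)*p^4 + ((-21138309 : ℝ)/4056146)*p^5)*(1 - (1-p)^8 - p^8) - 8*p*(1-p)^7 := by
      have hid : (((44530142213 : ℝ)/44536065000) + ((-29606933 : ℝ)/8484926)*p^1 + ((9813263 : ℝ)/6078635)*p^2 + ((15389949 : ℝ)/2943425)*p^3 + ((-3733958 : ℝ)/1787199)*p^4 + ((-21138309 : ℝ)/4056146)*p^5)*(1 - (1-p)^8 - p^8) - 8*p*(1-p)^7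
          = ((14035292425718475179513890965562942530223835081 : ℝ)/194493410871313346005566684971232968125)*((p - ((1 : ℝ)/8))^0*((1:ℝ)/4 - p)^13) + ((4010204521735246600232857375513064146054801091762 : ℝ)/4084361628297580266116900384395892330625)*((p - ((1 : ℝ)/8))^1*((1:ℝ)/4 - p)^12) + ((362609786595497370416212841546876266024027571064 : ℝ)/59193646786921453132128991078201338125)*((p - ((1 : ℝ)/8))^2*((1:ℝ)/4 - p)^11) + ((31653034520865350835531083837023842756963732607248 : ℝ)/1361453876099193422038966794798630776875)*((p - ((1 : ℝ)/8))^3*((1:ℝ)/4 - p)^10) + ((9794608400489361534136976242188160523531321844592 : ℝ)/163374465131903210644676015375835693225)*((p - ((1 : ℝ)/8))^4*((1:ℝ)/4 - p)^9) + ((18128803467688691913463932011425749273133671566432 : ℝ)/163374465131903210644676015375835693225)*((p - ((1 : ℝ)/8))^5*((1:ℝ)/4 - p)^8) + ((26935584266934668532720713918946038195846504025856 : ℝ)/177580940360764359396386973234604014375)*((p - ((1 : ℝ)/8))^6*((1:ℝ)/4 - p)^7) + ((633262513575647476635834689227528164748849654051328 : ℝ)/4084361628297580266116900384395892330625)*((p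 - ((1 : ℝ)/8))^7*((1:ℝ)/4 - p)^6) + ((96836190662743958729741134431251350564199093448448 : ℝ)/816872325659516053223380076879178466125)*((p - ((1 : ℝ)/8))^8*((1:ℝ)/4 - p)^5) + ((2188991886916808843316058915456751632119394375168 : ℝ)/32674893026380642128935203075167138645)*((p - ((1 : ℝ)/8))^9*((1:ℝ)/4 - p)^4) + ((111167461769202301463561790958525978205261975885824 : ℝ)/4084361628297580266116900384395892330625)*((p - ((1 : ℝ)/8))^10*((1:ℝ)/4 - p)^3) + ((30763443634704221266618007909600289703579459956736 : ℝ)/4084361628297580266116900384395892330625)*((p - ((1 : ℝ)/8))^11*((1:ℝ)/4 - p)^2) + ((247453481567269007189722718357370247904546476032 : ℝ)/194493410871313346005566684971232968125)*((p - ((1 : ℝ)/8))^12*((1:ℝ)/4 - p)^1) + ((134688318221623507892139935889881059261925548032 : ℝ)/1361453876099193422038966794798630776875)*((p - ((1 : ℝ)/8))^13*((1:ℝ)/4 - p)^0) := by ring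
      rw [hid]
      repeat' apply add_nonneg
      all_goals exact mul_nonneg (by norm_num) (mul_nonneg (pow_nonneg hx _) (pow_nonneg hy _))
    have h2 : (8*p*(1-p)^7)/(1 - (1-p)^8 - p^8) ≤ ((44530142213 : ℝ)/44536065000) + ((-29606933 : ℝ)/8484926)*p^1 + ((9813263 : ℝ)/6078635)*p^2 + ((15389949 : ℝ)/2943425)*p^3 + ((-3733958 : ℝ)/1787199)*p^4 + ((-21138309 : ℝ)/4056146)*p^5 := by
      rw [div_le_iff₀ hD]
      linarith
    simp only []
    linarith
  have hcontF : ContinuousOn (fun p : ℝ => 1 - (8*p*(1-p)^7)/(1 - (1-p)^8 - p^8)) (Set.Icc (((1 : ℝ)/8)) (1/4)) := by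
    apply ContinuousOn.sub continuousOn_const
    apply ContinuousOn.div (by fun_prop) (by fun_prop)
    intro x hx
    exact (D_pos (G := 8) (by norm_num) (by nlinarith [hx.1]) (by nlinarith [hx.2])).ne'
  have hIntF : IntegrableOn (fun p : ℝ => 1 - (8*p*(1-p)^7)/(1 - (1-p)^8 - p^8)) (Set.Ico (((1 : ℝ)/8)) (1/4)) volume :=
    (hcontF.integrableOn_Icc).mono_set Set.Ico_subset_Icc_self
  have hInt1 : IntegrableOn (overshootProb 8) (Set.Ioo (0:ℝ) (((1 : ℝ)/8))) volume :=
    (integrableOn_const measure_Ioo_lt_top.ne).congr_fun hEq1.symm measurableSet_Ioo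
  have hInt2 : IntegrableOn (overshootProb 8) (Set.Ico (((1 : ℝ)/8)) (1/4)) volume :=
    hIntF.congr_fun hEqF.symm measurableSet_Ico
  have hIntphi : IntegrableOn (fun p : ℝ => 1 - (((44530142213 : ℝ)/44536065000) + ((-29606933 : ℝ)/8484926)*p^1 + ((9813263 : ℝ)/6078635)*p^2 + ((15389949 : ℝ)/2943425)*p^3 + ((-3733958 : ℝ)/1787199)*p^4 + ((-21138309 : ℝ)/4056146)*p^5)) (Set.Ico (((1 : ℝ)/8)) (1/4)) volume :=
    (((by fun_prop : Continuous (fun p : ℝ => 1 - (((44530142213 : ℝ)/44536065000) + ((-29606933 : ℝ)/8484926)*p^1 + ((9813263 : ℝ)/6078635)*p^2 + ((15389949 : ℝ)/2943425)*p^3 + ((-3733958 : ℝ)/1787199)*p^4 + ((-21138309 : ℝ)/4056146)*p^5)))).continuousOn.integrableOn_Icc).mono_set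
      Set.Ico_subset_Icc_self
  have hI1 : ∫ p in Set.Ioo (0:ℝ) (((1 : ℝ)/8)), overshootProb 8 p = ((1 : ℝ)/8) := by
    rw [setIntegral_congr_fun measurableSet_Ioo hEq1]
    simp [Real.volume_Ioo]
    all_goals norm_num
  have hphiInt : ∫ p in Set.Ico (((1 : ℝ)/8)) ((1:ℝ)/4), (fun p : ℝ => 1 - (((44530142213 : ℝ)/44536065000) + ((-29606933 : ℝ)/8484926)*p^1 + ((9813263 : ℝ)/6078635)*p^2 + ((15389949 : ℝ)/2943425)*p^3 + ((-3733958 : ℝ)/1787199)*p^4 + ((-21138309 : ℝ)/4056146)*p^5)) p = ((100299939180628465530527348320731604996051563 : ℝ)/1427587859584587841707931645822769065492480000) := by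
    rw [setIntegral_congr_set Ico_ae_eq_Ioc,
        ← intervalIntegral.integral_of_le (by norm_num : (((1 : ℝ)/8)) ≤ (1:ℝ)/4)]
    rw [intervalIntegral.integral_eq_sub_of_hasDerivAt (f := fun x : ℝ => x - (((44530142213 : ℝ)/44536065000)*x^1 + ((-29606933 : ℝ)/16969852)*x^2 + ((9813263 : ℝ)/18235905)*x^3 + ((15389949 : ℝ)/11773700)*x^4 + ((-3733958 : ℝ)/8935995)*x^5 + ((-7046103 : ℝ)/8112292)*x^6)) ?_ ?_]
    · norm_num
    · intro x _
      have h := ((hasDerivAt_id x).sub (((((((hasDerivAt_pow 1 x).const_mul ((44530142213 : ℝ)/44536065000)).add ((hasDerivAt_pow 2 x).const_mul ((-29606933 : ℝ)/16969852))).add ((hasDerivAt_pow 3 x).const_mul ((9813263 : ℝ)/18235905))).add ((hasDerivAt_pow 4 x).const_mul ((15389949 : ℝ)/11773700))).add ((hasDerivAt_pow 5 x).const_mul ((-3733958 : ℝ)/8935995))).add ((hasDerivAt_pow 6 x).const_mul ((-7046103 : ℝ)/8112292))))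
      refine h.congr_deriv ?_
      push_cast
      ring
    · exact Continuous.intervalIntegrable (by fun_prop) _ _
  have hmono : ∫ p in Set.Ico (((1 : ℝ)/8)) ((1:ℝ)/4), (fun p : ℝ => 1 - (((44530142213 : ℝ)/44536065000) + ((-29606933 : ℝ)/8484926)*p^1 + ((9813263 : ℝ)/6078635)*p^2 + ((15389949 : ℝ)/2943425)*p^3 + ((-3733958 : ℝ)/1787199)*p^4 + ((-21138309 : ℝ)/4056146)*p^5)) p
      ≤ ∫ p in Set.Ico (((1 : ℝ)/8)) ((1:ℝ)/4), (fun p : ℝ => 1 - (8*p*(1-p)^7)/(1 - (1-p)^8 - p^8)) p :=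
    setIntegral_mono_on hIntphi hIntF measurableSet_Ico hkey
  have hI2 : ∫ p in Set.Ico (((1 : ℝ)/8)) ((1:ℝ)/4), overshootProb 8 p ≥ ((100299939180628465530527348320731604996051563 : ℝ)/1427587859584587841707931645822769065492480000) := by
    rw [setIntegral_congr_fun measurableSet_Ico hEqF]
    rw [hphiInt] at hmono
    exact hmono
  have hdisj : Disjoint (Set.Ioo (0:ℝ) (((1 : ℝ)/8))) (Set.Ico (((1 : ℝ)/8)) (1/4)) := by
    rw [Set.disjoint_left]
    rintro x ⟨_, h2⟩ ⟨h3, _⟩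
    linarith
  have hsplit : ∫ p in Set.Ioo (0:ℝ) (1/4), overshootProb 8 p
      = (∫ p in Set.Ioo (0:ℝ) (((1 : ℝ)/8)), overshootProb 8 p)
        + ∫ p in Set.Ico (((1 : ℝ)/8)) ((1:ℝ)/4), overshootProb 8 p := by
    rw [← setIntegral_union hdisj measurableSet_Ico hInt1 hInt2,
        Set.Ioo_union_Ico_eq_Ioo (by norm_num) (by norm_num)]
  rw [hsplit, hI1]
  have : (((1 : ℝ)/8) : ℝ) + ((100299939180628465530527348320731604996051563 : ℝ)/1427587859584587841707931645822769065492480000) > 0.78 / 4 := by norm_num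
  linarith


/-- For every integer `2 ≤ G ≤ 8`, the average of `P(p̂ > p | S)` over a uniformly
distributed difficulty `p` on the hard regime `(0, 1/4)` exceeds `0.78`. -/
theorem avg_overshoot_prob_hard_quarter (G : ℕ) (hG1 : 2 ≤ G) (hG2 : G ≤ 8) :
    4 * ∫ p in Set.Ioo (0 : ℝ) (1 / 4), overshootProb G p > 0.78 := by
  interval_cases G
  · exact auxOP2
  · exact auxOP3
  · exact auxOP4
  · exact auxOP5
  · exact auxOP6
  · exact auxOP7
  · exact auxOP8
end

section
/- Let G ≥ 2 be an integer, Δ ∈ (0, 1/2], p ∈ [Δ, 1−Δ], and δ ∈ (0,1). Define ε_δ = sqrt( (1/(2G)) · log( 2 / (δ·(1 − (1−Δ)^G − Δ^G)) ) ). Then, conditional on the non-degenerate event S, with probability at least 1 − δ one has |p̂ − p| < ε_δ; that is, P(|p̂ − p| < ε_δ | S) ≥ 1 − δ. -/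
/-!
Chernoff–Hoeffding. Hoeffding's lemma for a Bernoulli variable gives
`1 - p + p e^t ≤ exp (p t + t² / 8)`, so weighting the binomial tail `k ≥ G (p + ε)` by
`exp (t (k - G (p + ε))) ≥ 1` and summing with the binomial theorem bounds it by `exp (-2 G ε²)`
once `t = 4ε`; the lower tail is the same with `t = -4ε`. The choice of `ε_δ` makes
`2 exp (-2 G ε_δ²) ≤ δ (1 - (1-Δ)^G - Δ^G)`, and since `x^G + (1-x)^G` is convex and symmetric,
on `[Δ, 1-Δ]` it is largest at the endpoints, so this is at most `δ P(S)`.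
-/

open Finset Real MeasureTheory ProbabilityTheory

lemma one_sub_add_mul_exp_le_exp (p : ℝ) (hp : p ∈ Set.Icc (0 : ℝ) 1) (t : ℝ) :
    1 - p + p * exp t ≤ exp (p * t + t ^ 2 / 8) := by
  let μ : Measure ℝ := bernoulliMeasure 1 0 ⟨p, hp⟩
  have hbdd : ∀ᵐ x ∂μ, x ∈ Set.Icc (0 : ℝ) 1 := ae_iff.2 <|
    bernoulliMeasure_apply_of_notMem_of_notMem _ measurableSet_Icc.compl (by simp) (by simp)
  have hoeffding := (hasSubgaussianMGF_of_mem_Icc aemeasurable_id hbdd).mgf_le t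
  have hmgf : mgf (fun x ↦ id x - μ[id]) μ t = exp (-(p * t)) * (1 - p + p * exp t) := by
    simp only [mgf, μ, integral_bernoulliMeasure, id, smul_eq_mul, mul_one, mul_zero, add_zero,
      zero_sub]
    rw [show t * (1 - p) = t + -(p * t) by ring, show t * -p = -(p * t) by ring, exp_add]
    ring
  have hvar : ((‖(1 : ℝ) - 0‖₊ / 2) ^ 2 : NNReal) * t ^ 2 / 2 = t ^ 2 / 8 := by norm_num; ring
  rw [hmgf, hvar] at hoeffding
  calc 1 - p + p * exp t = exp (p * t) * (exp (-(p * t)) * (1 - p + p * exp t)) := by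
        rw [← mul_assoc, ← exp_add]; simp
    _ ≤ exp (p * t) * exp (t ^ 2 / 8) := by gcongr
    _ = exp (p * t + t ^ 2 / 8) := (exp_add _ _).symm

lemma choose_mul_pow_mul_pow_nonneg {p : ℝ} (hp : p ∈ Set.Icc (0 : ℝ) 1) (n k : ℕ) :
    0 ≤ (n.choose k : ℝ) * p ^ k * (1 - p) ^ (n - k) :=
  mul_nonneg (mul_nonneg (Nat.cast_nonneg _) (pow_nonneg hp.1 k))
    (pow_nonneg (sub_nonneg.2 hp.2) _)

lemma sum_range_choose_mul_pow_mul_pow_mul_exp (n : ℕ) (p t : ℝ) :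
    ∑ k ∈ range (n + 1), (n.choose k : ℝ) * p ^ k * (1 - p) ^ (n - k) * exp (t * k) =
      (1 - p + p * exp t) ^ n := by
  rw [show 1 - p + p * exp t = p * exp t + (1 - p) by ring, add_pow]
  refine sum_congr rfl fun k _ ↦ ?_
  rw [mul_comm t, exp_nat_mul]
  ring

lemma sum_Icc_choose_mul_pow_mul_pow {n : ℕ} (hn : 1 ≤ n) (p : ℝ) :
    ∑ k ∈ Icc 1 (n - 1), (n.choose k : ℝ) * p ^ k * (1 - p) ^ (n - k) =
      1 - (1 - p) ^ n - p ^ n := by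
  have htotal : ∑ k ∈ range (n + 1), (n.choose k : ℝ) * p ^ k * (1 - p) ^ (n - k) = 1 := by
    simpa using sum_range_choose_mul_pow_mul_pow_mul_exp n p 0
  have hn_not_min : ¬IsMin n := by rw [isMin_iff_eq_bot, Nat.bot_eq_zero]; omega
  rw [sum_range_succ, range_eq_Ico, sum_eq_sum_Ico_succ_bot (by omega),
    ← Icc_sub_one_right_eq_Ico_of_not_isMin hn_not_min] at htotal
  simp only [Nat.choose_zero_right, Nat.cast_one, pow_zero, mul_one, tsub_zero, one_mul,
    zero_add, Nat.choose_self, tsub_self] at htotal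
  linarith

lemma sum_choose_mul_pow_mul_pow_le_exp {n : ℕ} {p : ℝ} (hp : p ∈ Set.Icc (0 : ℝ) 1)
    {s : Finset ℕ} (hs : s ⊆ range (n + 1)) {t a : ℝ} (hsign : ∀ k ∈ s, 0 ≤ t * (k - a)) :
    ∑ k ∈ s, (n.choose k : ℝ) * p ^ k * (1 - p) ^ (n - k) ≤
      exp (n * (p * t + t ^ 2 / 8) - t * a) := by
  calc ∑ k ∈ s, (n.choose k : ℝ) * p ^ k * (1 - p) ^ (n - k)
      ≤ ∑ k ∈ s, (n.choose k : ℝ) * p ^ k * (1 - p) ^ (n - k) * exp (t * (k - a)) :=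
        sum_le_sum fun k hk ↦ le_mul_of_one_le_right
          (choose_mul_pow_mul_pow_nonneg hp n k) (one_le_exp (hsign k hk))
    _ ≤ ∑ k ∈ range (n + 1), (n.choose k : ℝ) * p ^ k * (1 - p) ^ (n - k) * exp (t * (k - a)) :=
        sum_le_sum_of_subset_of_nonneg hs fun k _ _ ↦
          mul_nonneg (choose_mul_pow_mul_pow_nonneg hp n k) (exp_pos _).le
    _ = exp (-(t * a)) * (1 - p + p * exp t) ^ n := by
        rw [← sum_range_choose_mul_pow_mul_pow_mul_exp, mul_sum]
        refine sum_congr rfl fun k _ ↦ ?_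
        rw [mul_sub, exp_sub, exp_neg]
        field_simp
    _ ≤ exp (-(t * a)) * exp (p * t + t ^ 2 / 8) ^ n := by
        gcongr
        · linarith [hp.2, mul_nonneg hp.1 (exp_pos t).le]
        · exact one_sub_add_mul_exp_le_exp p hp t
    _ = exp (n * (p * t + t ^ 2 / 8) - t * a) := by
        rw [← exp_nat_mul, ← exp_add]
        ring_nf

lemma sum_filter_le_abs_sub_choose_mul_pow_mul_pow_le {n : ℕ} (hn : 0 < n) {p : ℝ}
    (hp : p ∈ Set.Icc (0 : ℝ) 1) {s : Finset ℕ} (hs : s ⊆ range (n + 1)) {ε : ℝ} (hε : 0 ≤ ε) :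
    ∑ k ∈ s.filter (fun k : ℕ ↦ ε ≤ |(k : ℝ) / n - p|),
        (n.choose k : ℝ) * p ^ k * (1 - p) ^ (n - k) ≤ 2 * exp (-(2 * n * ε ^ 2)) := by
  have hn' : (0 : ℝ) < n := by exact_mod_cast hn
  rw [← sum_filter_add_sum_filter_not _ (fun k : ℕ ↦ p ≤ (k : ℝ) / n), filter_filter,
    filter_filter, two_mul]
  have hsub : ∀ P : ℕ → Prop, [DecidablePred P] → s.filter P ⊆ range (n + 1) :=
    fun P _ ↦ (filter_subset _ _).trans hs
  gcongr
  · refine (sum_choose_mul_pow_mul_pow_le_exp hp (hsub _) (t := 4 * ε) (a := n * (p + ε))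
      fun k hk ↦ ?_).trans_eq (by ring_nf)
    obtain ⟨-, hdev, hup⟩ := mem_filter.1 hk
    rw [abs_of_nonneg (sub_nonneg.2 hup), le_sub_iff_add_le', le_div_iff₀ hn'] at hdev
    nlinarith
  · refine (sum_choose_mul_pow_mul_pow_le_exp hp (hsub _) (t := -(4 * ε)) (a := n * (p - ε))
      fun k hk ↦ ?_).trans_eq (by ring_nf)
    obtain ⟨-, hdev, hlow⟩ := mem_filter.1 hk
    rw [abs_of_neg (sub_neg.2 (not_le.1 hlow)), neg_sub, le_sub_comm, div_le_iff₀ hn'] at hdev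
    nlinarith

lemma two_mul_exp_neg_two_mul_sq_le {n : ℕ} (hn : 0 < n) {c ε : ℝ} (hc : 0 < c)
    (hε : ε = √(1 / (2 * n) * log (2 / c))) : 2 * exp (-(2 * n * ε ^ 2)) ≤ c := by
  have hlog : log (2 / c) ≤ 2 * n * ε ^ 2 := by
    rw [hε, sq_sqrt']
    calc log (2 / c) = 2 * n * (1 / (2 * n) * log (2 / c)) := by field_simp
      _ ≤ _ := by gcongr; exact le_max_left _ _
  calc 2 * exp (-(2 * n * ε ^ 2)) ≤ 2 * exp (-log (2 / c)) := by gcongr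
    _ = c := by rw [exp_neg, exp_log (by positivity)]; field_simp

lemma pow_add_sub_pow_le_pow_add_sub_pow (n : ℕ) {x y h : ℝ} (hx : 0 ≤ x) (hxy : x ≤ y)
    (hh : 0 ≤ h) : (x + h) ^ n - x ^ n ≤ (y + h) ^ n - y ^ n := by
  rw [← geom_sum₂_mul, ← geom_sum₂_mul, add_sub_cancel_left, add_sub_cancel_left]
  have hy : 0 ≤ y := hx.trans hxy
  gcongr

lemma pow_add_one_sub_pow_lt_one {x : ℝ} (hx : x ∈ Set.Ioo (0 : ℝ) 1) {n : ℕ} (hn : 2 ≤ n) :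
    x ^ n + (1 - x) ^ n < 1 := by
  obtain ⟨hx0, hx1⟩ := hx
  have h1 : x ^ n ≤ x ^ 2 := pow_le_pow_of_le_one hx0.le hx1.le hn
  have h2 : (1 - x) ^ n ≤ (1 - x) ^ 2 := pow_le_pow_of_le_one (by linarith) (by linarith) hn
  nlinarith

/-- Conditional `p`-free concentration with confidence `1 − δ`: for `G ≥ 2`,
`Δ ∈ (0, 1/2]`, `p ∈ [Δ, 1−Δ]` and `δ ∈ (0,1)`, setting
`ε_δ = sqrt((1/(2G))·log(2/(δ·(1 − (1−Δ)^G − Δ^G))))`, the conditional probability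
(ratio of binomial sums over `k = 1,…,G−1` to `P(S)`) of `|p̂ − p| < ε_δ` is at least
`1 − δ`. -/
theorem cond_concentration_confidence (G : ℕ) (hG : 2 ≤ G) (Δ : ℝ)
    (hΔ : Δ ∈ Set.Ioc (0 : ℝ) (1 / 2)) (p : ℝ) (hp : p ∈ Set.Icc Δ (1 - Δ))
    (δ : ℝ) (hδ : δ ∈ Set.Ioo (0 : ℝ) 1) (εδ : ℝ)
    (hεδ : εδ = Real.sqrt ((1 / (2 * G)) *
      Real.log (2 / (δ * (1 - (1 - Δ) ^ G - Δ ^ G))))) :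
    (∑ k ∈ (Finset.Icc 1 (G - 1)).filter (fun k : ℕ => |(k : ℝ) / G - p| < εδ),
        (G.choose k : ℝ) * p ^ k * (1 - p) ^ (G - k))
      / (1 - (1 - p) ^ G - p ^ G)
    ≥ 1 - δ := by
  obtain ⟨hpΔ, hpΔ'⟩ := hp
  have hp01 : p ∈ Set.Icc (0 : ℝ) 1 := ⟨hΔ.1.le.trans hpΔ, by linarith [hΔ.1]⟩
  have hC : 0 < 1 - (1 - Δ) ^ G - Δ ^ G := by
    linarith [pow_add_one_sub_pow_lt_one ⟨hΔ.1, by linarith⟩ hG]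
  have hCS : 1 - (1 - Δ) ^ G - Δ ^ G ≤ 1 - (1 - p) ^ G - p ^ G := by
    have := pow_add_sub_pow_le_pow_add_sub_pow G hΔ.1.le (show Δ ≤ 1 - p by linarith)
      (sub_nonneg.2 hpΔ)
    rw [add_sub_cancel, show 1 - p + (p - Δ) = 1 - Δ by ring] at this
    linarith
  have hmass := sum_Icc_choose_mul_pow_mul_pow (by omega : 1 ≤ G) p
  rw [← sum_filter_add_sum_filter_not _ (fun k : ℕ ↦ |(k : ℝ) / G - p| < εδ)] at hmass
  simp_rw [not_lt] at hmass
  have hIcc : Icc 1 (G - 1) ⊆ range (G + 1) := fun k hk ↦ by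
    rw [mem_Icc] at hk; rw [mem_range]; omega
  have hbad := (sum_filter_le_abs_sub_choose_mul_pow_mul_pow_le (by omega) hp01 hIcc
    (hεδ ▸ sqrt_nonneg _)).trans (two_mul_exp_neg_two_mul_sq_le (by omega) (mul_pos hδ.1 hC) hεδ)
  rw [ge_iff_le, le_div_iff₀ (hC.trans_le hCS)]
  linarith [mul_le_mul_of_nonneg_left hCS hδ.1.le]
end

section
/- Let G ≥ 2 be an integer, Δ ∈ (0, 1/2], p ∈ [Δ, 1−Δ], δ ∈ (0,1), and ε > 0. Define ε_δ = sqrt( (1/(2G)) · log( 2 / (δ·(1 − (1−Δ)^G − Δ^G)) ) ), and for any real p̂₀ ∈ [0,1] set I = [p̂₀ − ε_δ, p̂₀ + ε_δ] ∩ [Δ, 1−Δ], A(q) = 1 − (1−q)^G − q^G, c_low = sup_{q ∈ I} (q − ε)·A(q)/(q(1 − q^{G−1})), c_high = inf_{q ∈ I} (q + ε)·A(q)/(q(1 − q^{G−1})). If |p̂₀ − p| < ε_δ (so that p ∈ I), then for every c ∈ (c_low, c_high) the rectified conditional baseline satisfies E[c·p̂ | S] = c·p·(1 − p^{G−1})/A(p)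 ∈ (p − ε, p + ε). -/
/-- A `p`-free feasible range of the rectification factor `c` expressed via an observed
baseline `phat0`: for `G ≥ 2`, `Δ ∈ (0, 1/2]`, `p ∈ [Δ, 1−Δ]`, `δ ∈ (0,1)` and `ε > 0`,
with `ε_δ = sqrt((1/(2G))·log(2/(δ·(1 − (1−Δ)^G − Δ^G))))`,
`I = [phat0 − ε_δ, phat0 + ε_δ] ∩ [Δ, 1−Δ]`, `A(q) = 1 − (1−q)^G − q^G`,
`c_low = sup_{q ∈ I} (q − ε)·A(q)/(q(1 − q^(G−1)))` and
`c_high = inf_{q ∈ I} (q + ε)·A(q)/(q(1 − q^(G−1)))`: if `|phat0 − p| < ε_δ`, then for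
every `c ∈ (c_low, c_high)` the rectified conditional baseline
`E[c·p̂ | S] = c·p·(1 − p^(G−1))/A(p)` lies in `(p − ε, p + ε)`. -/
theorem rectification_feasible_range (G : ℕ) (hG : 2 ≤ G) (Δ : ℝ)
    (hΔ : Δ ∈ Set.Ioc (0 : ℝ) (1 / 2)) (p : ℝ) (hp : p ∈ Set.Icc Δ (1 - Δ))
    (δ : ℝ) (hδ : δ ∈ Set.Ioo (0 : ℝ) 1) (ε : ℝ) (hε : 0 < ε)
    (phat0 : ℝ) (hphat0 : phat0 ∈ Set.Icc (0 : ℝ) 1) (εδ : ℝ)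
    (hεδ : εδ = Real.sqrt ((1 / (2 * G)) *
      Real.log (2 / (δ * (1 - (1 - Δ) ^ G - Δ ^ G)))))
    (I : Set ℝ) (hI : I = Set.Icc (phat0 - εδ) (phat0 + εδ) ∩ Set.Icc Δ (1 - Δ))
    (A : ℝ → ℝ) (hA : A = fun q => 1 - (1 - q) ^ G - q ^ G)
    (clow : ℝ)
    (hclow : clow = sSup ((fun q => (q - ε) * A q / (q * (1 - q ^ (G - 1)))) '' I))
    (chigh : ℝ)
    (hchigh : chigh = sInf ((fun q => (q + ε) * A q / (q * (1 - q ^ (G - 1)))) '' I))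
    (hclose : |phat0 - p| < εδ) :
    ∀ c ∈ Set.Ioo clow chigh,
      c * p * (1 - p ^ (G - 1)) / A p ∈ Set.Ioo (p - ε) (p + ε) := by
  obtain ⟨hΔ0, hΔh⟩ := hΔ
  obtain ⟨hpl, hpu⟩ := hp
  have hp0 : 0 < p := lt_of_lt_of_le hΔ0 hpl
  have hp1 : p < 1 := lt_of_le_of_lt hpu (by linarith)
  have hGm : G - 1 ≠ 0 := by omega
  rw [abs_sub_lt_iff] at hclose
  have hpI : p ∈ I := by
    rw [hI]
    exact ⟨⟨by linarith [hclose.2], by linarith [hclose.1]⟩, hpl, hpu⟩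
  have hIsub : I ⊆ Set.Icc Δ (1 - Δ) := by rw [hI]; exact Set.inter_subset_right
  have hdenpos : ∀ q ∈ I, 0 < q * (1 - q ^ (G - 1)) := by
    intro q hq
    obtain ⟨hq1, hq2⟩ := hIsub hq
    have hq0 : 0 < q := lt_of_lt_of_le hΔ0 hq1
    have hqlt1 : q < 1 := lt_of_le_of_lt hq2 (by linarith)
    have : q ^ (G - 1) < 1 := pow_lt_one₀ hq0.le hqlt1 hGm
    exact mul_pos hq0 (by linarith)
  have hcomp : IsCompact I := by
    rw [hI]; exact isCompact_Icc.inter isCompact_Icc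
  have hcontlow : ContinuousOn (fun q => (q - ε) * A q / (q * (1 - q ^ (G - 1)))) I := by
    apply ContinuousOn.div
    · subst hA; fun_prop
    · fun_prop
    · exact fun q hq => (hdenpos q hq).ne'
  have hconthigh : ContinuousOn (fun q => (q + ε) * A q / (q * (1 - q ^ (G - 1)))) I := by
    apply ContinuousOn.div
    · subst hA; fun_prop
    · fun_prop
    · exact fun q hq => (hdenpos q hq).ne'
  have hbddA : BddAbove ((fun q => (q - ε) * A q / (q * (1 - q ^ (G - 1)))) '' I) :=
    (hcomp.image_of_continuousOn hcontlow).bddAbove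
  have hbddB : BddBelow ((fun q => (q + ε) * A q / (q * (1 - q ^ (G - 1)))) '' I) :=
    (hcomp.image_of_continuousOn hconthigh).bddBelow
  have hlow : (p - ε) * A p / (p * (1 - p ^ (G - 1))) ≤ clow := by
    rw [hclow]; exact le_csSup hbddA (Set.mem_image_of_mem _ hpI)
  have hhigh : chigh ≤ (p + ε) * A p / (p * (1 - p ^ (G - 1))) := by
    rw [hchigh]; exact csInf_le hbddB (Set.mem_image_of_mem _ hpI)
  have hD : 0 < p * (1 - p ^ (G - 1)) := hdenpos p hpI
  have hAp : 0 < A p := by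
    rw [hA]
    have h1 : p ^ G < p := by
      calc p ^ G < p ^ 1 := pow_lt_pow_right_of_lt_one₀ hp0 hp1 (by omega)
      _ = p := pow_one p
    have h2 : (1 - p) ^ G < 1 - p := by
      calc (1 - p) ^ G < (1 - p) ^ 1 :=
        pow_lt_pow_right_of_lt_one₀ (by linarith) (by linarith) (by omega)
      _ = 1 - p := pow_one _
    simp only
    linarith
  intro c hc
  obtain ⟨hc1, hc2⟩ := hc
  have h1 : (p - ε) * A p < c * (p * (1 - p ^ (G - 1))) :=
    (div_lt_iff₀ hD).mp (lt_of_le_of_lt hlow hc1)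
  have h2 : c * (p * (1 - p ^ (G - 1))) < (p + ε) * A p :=
    (lt_div_iff₀ hD).mp (lt_of_lt_of_le hc2 hhigh)
  have hassoc : c * p * (1 - p ^ (G - 1)) = c * (p * (1 - p ^ (G - 1))) := by ring
  constructor
  · rw [lt_div_iff₀ hAp]; linarith
  · rw [div_lt_iff₀ hAp]; linarith
end

section
/- Let G ≥ 2 be an integer and let X_1, …, X_G be i.i.d. real random variables supported on [0,1] whose common law is absolutely continuous with density f (with respect to Lebesgue measure) and cumulative distribution function F. Fix σ ∈ [0,1], set u⁺ = min(1, u + σ) and q(u) = F(u⁺) − F(u), and let p̂ = (1/G)·Σ_{i=1}^G X_i. Then the expectation of p̂ restricted to the small-range event satisfies E[ p̂ · 1_{{max_i X_i − min_i X_i ≤ σ}} ] = ∫_0^1 f(u) · q(u)^{G−2} · ( u·q(u) + (G−1)·∫_u^{u⁺} x f(x) dx ) du. -/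
open MeasureTheory ProbabilityTheory
open scoped NNReal ENNReal

section AuxRESM

lemma resm_prodInt {n : ℕ} (ν : Measure ℝ) [SigmaFinite ν] (g : Fin n → ℝ → ℝ) :
    ∫ y : Fin n → ℝ, ∏ j, g j (y j) ∂(Measure.pi fun _ => ν) = ∏ j, ∫ t, g j t ∂ν := by
  letI : MeasureSpace ℝ := ⟨ν⟩
  exact integral_fintype_prod_eq_prod g


lemma resm_keyFubini {n : ℕ} (ν : Measure ℝ) [IsProbabilityMeasure ν]
    (hsupp : ν (Set.Icc (0:ℝ) 1)ᶜ = 0) (σ : ℝ) (hσ : 0 ≤ σ) (i : Fin (n+1)) :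
    ∫ x in {x : Fin (n+1) → ℝ | ∀ j, j ≠ i → x j ∈ Set.Ioc (x i) (x i + σ)},
        (∑ j, x j) ∂(Measure.pi fun _ => ν)
      = ∫ u, (u * ((ν (Set.Ioc u (u+σ))).toReal ^ n)
          + n * (∫ t in Set.Ioc u (u+σ), t ∂ν) * (ν (Set.Ioc u (u+σ))).toReal ^ (n-1)) ∂ν := by
  classical
  set π : Measure (Fin (n+1) → ℝ) := Measure.pi fun _ => ν with hπ
  set π' : Measure (Fin n → ℝ) := Measure.pi fun _ => ν with hπ'
  set A : Set (Fin (n+1) → ℝ) :=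
    {x | ∀ j, j ≠ i → x j ∈ Set.Ioc (x i) (x i + σ)} with hA
  set ind : ℝ → ℝ → ℝ := fun u t => (Set.Ioc u (u+σ)).indicator 1 t with hind
  set g : ℝ × (Fin n → ℝ) → ℝ :=
    fun p => (p.1 + ∑ j, p.2 j) * ∏ j, ind p.1 (p.2 j) with hg
  have hApart : ∀ u t, ind u t = if t ∈ Set.Ioc u (u+σ) then 1 else 0 := by
    intro u t; simp [hind, Set.indicator_apply]
  have hind01 : ∀ u t, 0 ≤ ind u t ∧ ind u t ≤ 1 := by
    intro u t; rw [hApart]; split <;> norm_num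
  have hprod01 : ∀ u (y : Fin n → ℝ), 0 ≤ (∏ j, ind u (y j)) ∧ (∏ j, ind u (y j)) ≤ 1 := by
    intro u y
    constructor
    · exact Finset.prod_nonneg fun j _ => (hind01 u (y j)).1
    · exact Finset.prod_le_one (fun j _ => (hind01 u (y j)).1) (fun j _ => (hind01 u (y j)).2)
  have hAmeas : MeasurableSet A := by
    have : A = ⋂ j, {x : Fin (n+1) → ℝ | j ≠ i → x j ∈ Set.Ioc (x i) (x i + σ)} := by
      ext x; simp [hA]
    rw [this]
    refine MeasurableSet.iInter fun j => ?_
    by_cases hj : j = i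
    · simp [hj]
    · have : {x : Fin (n+1) → ℝ | j ≠ i → x j ∈ Set.Ioc (x i) (x i + σ)}
          = {x : Fin (n+1) → ℝ | x i < x j} ∩ {x | x j ≤ x i + σ} := by
        ext x; simp [hj, Set.mem_Ioc, and_comm]
      rw [this]
      exact ((measurableSet_lt (measurable_pi_apply i) (measurable_pi_apply j))).inter
        (measurableSet_le (measurable_pi_apply j)
          ((measurable_pi_apply i).add measurable_const))
  -- the equiv
  set e := MeasurableEquiv.piFinSuccAbove (fun _ : Fin (n+1) => ℝ) i with he
  have hmp : MeasurePreserving e π (ν.prod π') :=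
    measurePreserving_piFinSuccAbove (fun _ => ν) i
  have hcomp : ∀ x, g (e x) = A.indicator (fun x => ∑ j, x j) x := by
    intro x
    have hsum : ∑ j, x j = x i + ∑ j : Fin n, x (i.succAbove j) :=
      Fin.sum_univ_succAbove x i
    by_cases hx : x ∈ A
    · have : ∀ j : Fin n, ind (x i) (x (i.succAbove j)) = 1 := by
        intro j
        rw [hApart, if_pos]
        exact hx _ (Fin.succAbove_ne i j)
      simp only [hg, he, Set.indicator_of_mem hx]
      simp [MeasurableEquiv.piFinSuccAbove_apply, Fin.insertNthEquiv_symm_apply, Fin.removeNth, this, ← hsum]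
    · obtain ⟨j, hji, hj⟩ : ∃ j, j ≠ i ∧ x j ∉ Set.Ioc (x i) (x i + σ) := by
        by_contra h
        push_neg at h
        exact hx fun j hji => h j hji
      obtain ⟨k, hk⟩ := Fin.exists_succAbove_eq hji
      have hzero : ind (x i) (x (i.succAbove k)) = 0 := by
        rw [hApart, if_neg]; rw [hk]; exact hj
      simp only [hg, he, Set.indicator_of_notMem hx,
        MeasurableEquiv.piFinSuccAbove_apply, Fin.insertNthEquiv_symm_apply, MeasurableEquiv.coe_mk, Equiv.coe_fn_mk]
      rw [Finset.prod_eq_zero (Finset.mem_univ k)]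
      · ring
      · simpa [Fin.removeNth] using hzero
  have hgmeas : Measurable g := by
    apply Measurable.mul
    · exact measurable_fst.add (Finset.measurable_sum _ fun j _ =>
        (measurable_pi_apply j).comp measurable_snd)
    · refine Finset.measurable_prod _ fun j _ => ?_
      have : (fun p : ℝ × (Fin n → ℝ) => ind p.1 (p.2 j))
          = fun p => if p.2 j - p.1 ∈ Set.Ioc 0 σ then (1:ℝ) else 0 := by
        funext p
        rw [hApart]
        refine if_congr ?_ rfl rfl
        simp only [Set.mem_Ioc, sub_pos, sub_le_iff_le_add]
        constructor
        · rintro ⟨h1, h2⟩; exact ⟨h1, by linarith⟩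
        · rintro ⟨h1, h2⟩; exact ⟨h1, by linarith⟩
      rw [this]
      have hm1 : Measurable fun p : ℝ × (Fin n → ℝ) => p.2 j - p.1 :=
        ((measurable_pi_apply j).comp measurable_snd).sub measurable_fst
      exact Measurable.ite (measurableSet_Ioc.preimage hm1)
        measurable_const measurable_const
  have hae : ∀ᵐ p ∂(ν.prod π'), p.1 ∈ Set.Icc (0:ℝ) 1 := by
    rw [ae_iff]
    have hset : {p : ℝ × (Fin n → ℝ) | ¬ p.1 ∈ Set.Icc (0:ℝ) 1}
        = (Set.Icc (0:ℝ) 1)ᶜ ×ˢ Set.univ := by ext p; simp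
    rw [hset, Measure.prod_prod, hsupp, zero_mul]
  have hg_int : Integrable g (ν.prod π') := by
    refine ⟨hgmeas.aestronglyMeasurable,
      HasFiniteIntegral.of_bounded (C := 1 + n * (1 + σ)) ?_⟩
    filter_upwards [hae] with p hp
    by_cases h0 : (∏ j, ind p.1 (p.2 j)) = 0
    · have : g p = 0 := by rw [hg]; simp only; rw [h0, mul_zero]
      rw [this, norm_zero]
      positivity
    · have hmem : ∀ j, p.2 j ∈ Set.Ioc p.1 (p.1 + σ) := by
        intro j
        have hne := Finset.prod_ne_zero_iff.1 h0 j (Finset.mem_univ j)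
        rw [hApart] at hne
        by_contra hmemc; rw [if_neg hmemc] at hne; exact hne rfl
      have habs : ∀ j, |p.2 j| ≤ 1 + σ := by
        intro j
        obtain ⟨h1, h2⟩ := hmem j
        rw [abs_le]
        constructor
        · nlinarith [hp.1, hp.2]
        · nlinarith [hp.1, hp.2]
      have hsum : ∑ j, |p.2 j| ≤ n * (1 + σ) := by
        calc ∑ j, |p.2 j| ≤ ∑ _j : Fin n, (1 + σ) :=
              Finset.sum_le_sum fun j _ => habs j
          _ = n * (1 + σ) := by rw [Finset.sum_const, Finset.card_univ,
              Fintype.card_fin, nsmul_eq_mul]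
      have habs1 : |p.1| ≤ 1 := by rw [abs_le]; exact ⟨by linarith [hp.1], hp.2⟩
      have hprodabs : |∏ j, ind p.1 (p.2 j)| ≤ 1 := by
        rw [abs_of_nonneg (hprod01 p.1 p.2).1]; exact (hprod01 p.1 p.2).2
      calc ‖g p‖ = |p.1 + ∑ j, p.2 j| * |∏ j, ind p.1 (p.2 j)| := by
            rw [hg]; exact abs_mul _ _
        _ ≤ (|p.1| + ∑ j, |p.2 j|) * 1 := by
            refine mul_le_mul ((abs_add_le _ _).trans ?_) hprodabs (abs_nonneg _) ?_
            · gcongr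
              exact Finset.abs_sum_le_sum_abs _ _
            · positivity
        _ ≤ 1 + n * (1 + σ) := by rw [mul_one]; linarith
  have hstep1 : ∫ x in A, (∑ j, x j) ∂π = ∫ p, g p ∂(ν.prod π') := by
    rw [← integral_indicator hAmeas, ← hmp.integral_comp e.measurableEmbedding g]
    exact integral_congr_ae (Filter.Eventually.of_forall fun x => (hcomp x).symm)
  rw [hstep1, integral_prod g hg_int]
  refine integral_congr_ae (Filter.Eventually.of_forall fun u => ?_)
  -- inner integral computation for fixed u
  have hind_meas : Measurable (ind u) :=
    Measurable.indicator measurable_const measurableSet_Ioc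
  have hP_meas : Measurable fun y : Fin n → ℝ => ∏ j, ind u (y j) :=
    Finset.measurable_prod _ fun j _ => hind_meas.comp (measurable_pi_apply j)
  have hP_int : Integrable (fun y : Fin n → ℝ => ∏ j, ind u (y j)) π' := by
    refine ⟨hP_meas.aestronglyMeasurable,
      HasFiniteIntegral.of_bounded (C := 1) (Filter.Eventually.of_forall fun y => ?_)⟩
    rw [Real.norm_eq_abs, abs_of_nonneg (hprod01 u y).1]
    exact (hprod01 u y).2
  have hyk_int : ∀ k : Fin n,
      Integrable (fun y : Fin n → ℝ => y k * ∏ j, ind u (y j)) π' := by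
    intro k
    refine ⟨((measurable_pi_apply k).mul hP_meas).aestronglyMeasurable,
      HasFiniteIntegral.of_bounded (C := |u| + σ)
        (Filter.Eventually.of_forall fun y => ?_)⟩
    by_cases h0 : (∏ j, ind u (y j)) = 0
    · rw [Real.norm_eq_abs, h0, mul_zero, abs_zero]
      positivity
    · have hne := Finset.prod_ne_zero_iff.1 h0 k (Finset.mem_univ k)
      rw [hApart] at hne
      have hmem : y k ∈ Set.Ioc u (u + σ) := by
        by_contra hmemc; rw [if_neg hmemc] at hne; exact hne rfl
      obtain ⟨h1, h2⟩ := hmem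
      have habsk : |y k| ≤ |u| + σ := by
        rw [abs_le]
        constructor
        · linarith [neg_abs_le u]
        · linarith [le_abs_self u]
      calc ‖y k * ∏ j, ind u (y j)‖ = |y k| * |∏ j, ind u (y j)| := abs_mul _ _
        _ ≤ (|u| + σ) * 1 := by
            refine mul_le_mul habsk ?_ (abs_nonneg _) (by positivity)
            rw [abs_of_nonneg (hprod01 u y).1]; exact (hprod01 u y).2
        _ = |u| + σ := mul_one _
  have hIone : ∫ t, ind u t ∂ν = (ν (Set.Ioc u (u + σ))).toReal := by
    rw [hind]
    exact integral_indicator_one measurableSet_Ioc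
  have hIid : ∫ t, t * ind u t ∂ν = ∫ t in Set.Ioc u (u + σ), t ∂ν := by
    have : ∀ t, t * ind u t = (Set.Ioc u (u+σ)).indicator (fun t => t) t := by
      intro t
      by_cases ht : t ∈ Set.Ioc u (u + σ)
      · rw [Set.indicator_of_mem ht, hApart, if_pos ht, mul_one]
      · rw [Set.indicator_of_notMem ht, hApart, if_neg ht, mul_zero]
    simp_rw [this]
    exact integral_indicator measurableSet_Ioc
  have hsplit : ∀ y : Fin n → ℝ, g (u, y)
      = u * ∏ j, ind u (y j) + ∑ k, y k * ∏ j, ind u (y j) := by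
    intro y
    rw [hg]
    simp only
    rw [add_mul, Finset.sum_mul]
  calc ∫ y, g (u, y) ∂π'
      = ∫ y, (u * ∏ j, ind u (y j) + ∑ k, y k * ∏ j, ind u (y j)) ∂π' := by
        simp_rw [hsplit]
    _ = u * (∫ y, ∏ j, ind u (y j) ∂π')
        + ∑ k, ∫ y, y k * ∏ j, ind u (y j) ∂π' := by
        rw [integral_add (hP_int.const_mul u)
          (integrable_finset_sum _ fun k _ => hyk_int k),
          integral_const_mul, integral_finset_sum _ fun k _ => hyk_int k]
    _ = u * (ν (Set.Ioc u (u+σ))).toReal ^ n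
        + ∑ _k : Fin n, (∫ t in Set.Ioc u (u+σ), t ∂ν)
            * (ν (Set.Ioc u (u+σ))).toReal ^ (n-1) := by
        congr 1
        · rw [resm_prodInt ν (fun _ => ind u), Finset.prod_const, Finset.card_univ,
            Fintype.card_fin, hIone]
        · refine Finset.sum_congr rfl fun k _ => ?_
          have hkform : ∀ y : Fin n → ℝ, y k * ∏ j, ind u (y j)
              = ∏ j, (fun t => if j = k then t * ind u t else ind u t) (y j) := by
            intro y
            have h1 : (∏ j, (fun t => if j = k then t * ind u t else ind u t) (y j))
                = (y k * ind u (y k)) * ∏ j ∈ Finset.univ.erase k, ind u (y j) := by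
              rw [← Finset.mul_prod_erase Finset.univ _ (Finset.mem_univ k)]
              congr 1
              · simp
              · exact Finset.prod_congr rfl fun j hj =>
                  if_neg (Finset.ne_of_mem_erase hj)
            have h2 : (∏ j, ind u (y j))
                = ind u (y k) * ∏ j ∈ Finset.univ.erase k, ind u (y j) :=
              (Finset.mul_prod_erase Finset.univ _ (Finset.mem_univ k)).symm
            rw [h1, h2]; ring
          simp_rw [hkform]
          rw [resm_prodInt ν (fun j => fun t => if j = k then t * ind u t else ind u t)]
          have h3 : (∏ j : Fin n, ∫ t, (if j = k then t * ind u t else ind u t) ∂ν)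
              = (∫ t, t * ind u t ∂ν)
                * ∏ j ∈ Finset.univ.erase k, ∫ t, ind u t ∂ν := by
            rw [← Finset.mul_prod_erase Finset.univ
              (fun j => ∫ t, (if j = k then t * ind u t else ind u t) ∂ν)
              (Finset.mem_univ k)]
            congr 1
            · simp
            · exact Finset.prod_congr rfl fun j hj => by
                simp only [if_neg (Finset.ne_of_mem_erase hj)]
          rw [h3, hIid, hIone, Finset.prod_const,
            Finset.card_erase_of_mem (Finset.mem_univ k),
            Finset.card_univ, Fintype.card_fin]
    _ = u * (ν (Set.Ioc u (u+σ))).toReal ^ n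
        + n * (∫ t in Set.Ioc u (u+σ), t ∂ν) * (ν (Set.Ioc u (u+σ))).toReal ^ (n-1) := by
        rw [Finset.sum_const, Finset.card_univ, Fintype.card_fin, nsmul_eq_mul]
        ring


lemma resm_mapPi {Ω : Type*} [MeasurableSpace Ω] (μ : Measure Ω) [IsProbabilityMeasure μ]
    {G : ℕ} (X : Fin G → Ω → ℝ) (hXmeas : ∀ i, Measurable (X i))
    (hindep : iIndepFun X μ)
    (ν : Measure ℝ) [IsProbabilityMeasure ν] (hlaw : ∀ i, Measure.map (X i) μ = ν) :
    Measure.map (fun ω i => X i ω) μ = Measure.pi fun _ => ν := by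
  refine ((Measure.pi_eq (μ := fun _ : Fin G => ν) fun s hs => ?_)).symm
  rw [Measure.map_apply (measurable_pi_lambda _ hXmeas) (MeasurableSet.univ_pi hs)]
  have : (fun ω i => X i ω) ⁻¹' Set.pi Set.univ s = ⋂ i, X i ⁻¹' s i := by
    ext ω; simp [Set.mem_pi]
  rw [this, hindep.meas_iInter fun i => ⟨s i, hs i, rfl⟩]
  exact Finset.prod_congr rfl fun i _ => by
    rw [← hlaw i, Measure.map_apply (hXmeas i) (hs i)]


lemma resm_diagNull {n : ℕ} (ν : Measure ℝ) [IsProbabilityMeasure ν] [NullSingletonClass ν]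
    {i j : Fin (n+1)} (hij : j ≠ i) :
    Measure.pi (fun _ : Fin (n+1) => ν) {x | x i = x j} = 0 := by
  obtain ⟨k, hk⟩ := Fin.exists_succAbove_eq hij
  set π' : Measure (Fin n → ℝ) := Measure.pi fun _ => ν with hπ'
  set e := MeasurableEquiv.piFinSuccAbove (fun _ : Fin (n+1) => ℝ) i with he
  have hmp : MeasurePreserving e (Measure.pi fun _ => ν) (ν.prod π') :=
    measurePreserving_piFinSuccAbove (fun _ => ν) i
  have hm1 : Measurable fun p : ℝ × (Fin n → ℝ) => p.2 k :=
    (measurable_pi_apply k).comp measurable_snd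
  have hmeas2 : MeasurableSet {p : ℝ × (Fin n → ℝ) | p.2 k = p.1} :=
    measurableSet_eq_fun hm1 measurable_fst
  have hset : {x : Fin (n+1) → ℝ | x i = x j}
      = e ⁻¹' {p : ℝ × (Fin n → ℝ) | p.2 k = p.1} := by
    ext x
    simp only [Set.mem_setOf_eq, Set.mem_preimage, he, MeasurableEquiv.piFinSuccAbove_apply, Fin.insertNthEquiv_symm_apply,
      MeasurableEquiv.coe_mk, Equiv.coe_fn_mk, Fin.removeNth, ← hk]
    exact eq_comm
  rw [hset, ← Measure.map_apply e.measurable hmeas2, hmp.map_eq,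
    Measure.prod_apply hmeas2]
  have hz : ∀ u : ℝ, π' (Prod.mk u ⁻¹' {p : ℝ × (Fin n → ℝ) | p.2 k = p.1}) = 0 := by
    intro u
    have hpre : (Prod.mk u ⁻¹' {p : ℝ × (Fin n → ℝ) | p.2 k = p.1})
        = Function.eval k ⁻¹' ({u} : Set ℝ) := by
      ext y; simp [Function.eval, eq_comm]
    rw [hpre, hπ']
    exact Measure.pi_eval_preimage_null _ (measure_singleton u)
  simp only [hz, lintegral_zero]


lemma resm_Ameas {G : ℕ} (σ : ℝ) (i : Fin G) :
    MeasurableSet {x : Fin G → ℝ | ∀ j, j ≠ i → x j ∈ Set.Ioc (x i) (x i + σ)} := by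
  have : {x : Fin G → ℝ | ∀ j, j ≠ i → x j ∈ Set.Ioc (x i) (x i + σ)}
      = ⋂ j, {x : Fin G → ℝ | j ≠ i → x j ∈ Set.Ioc (x i) (x i + σ)} := by
    ext x; simp
  rw [this]
  refine MeasurableSet.iInter fun j => ?_
  by_cases hj : j = i
  · simp [hj]
  · have : {x : Fin G → ℝ | j ≠ i → x j ∈ Set.Ioc (x i) (x i + σ)}
        = {x : Fin G → ℝ | x i < x j} ∩ {x | x j ≤ x i + σ} := by
      ext x; simp [hj, Set.mem_Ioc, and_comm]
    rw [this]
    exact ((measurableSet_lt (measurable_pi_apply i) (measurable_pi_apply j))).inter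
      (measurableSet_le (measurable_pi_apply j)
        ((measurable_pi_apply i).add measurable_const))

end AuxRESM

/-- Restricted expectation of the sample mean on the small-range event for i.i.d.
rewards with a density on `[0,1]`: if `X_1, …, X_G` (`G ≥ 2`) are i.i.d. real random
variables supported on `[0,1]` with common density `f` (w.r.t. Lebesgue measure) and
CDF `F`, then for `σ ∈ [0,1]`, with `u⁺ = min(1, u + σ)`, `q(u) = F(u⁺) − F(u)` and
`p̂ = (1/G)·Σ_i X_i`,
`E[p̂ · 1_{max_i X_i − min_i X_i ≤ σ}]
  = ∫_0^1 f(u)·q(u)^(G−2)·(u·q(u) + (G−1)·∫_u^{u⁺} x f(x) dx) du`. -/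
theorem restricted_expectation_sample_mean_small_range
    {Ω : Type*} [MeasurableSpace Ω] (μ : Measure Ω) [IsProbabilityMeasure μ]
    (G : ℕ) (hG : 2 ≤ G) (X : Fin G → Ω → ℝ)
    (hXmeas : ∀ i, Measurable (X i))
    (hindep : iIndepFun X μ)
    (f : ℝ → ℝ) (hf_meas : Measurable f) (hf_nonneg : ∀ x, 0 ≤ f x)
    (hf_supp : ∀ x, x ∉ Set.Icc (0 : ℝ) 1 → f x = 0)
    (hlaw : ∀ i, Measure.map (X i) μ
      = MeasureTheory.volume.withDensity (fun x => ENNReal.ofReal (f x)))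
    (F : ℝ → ℝ) (hF : ∀ x, F x = ∫ t in Set.Iic x, f t)
    (σ : ℝ) (hσ : σ ∈ Set.Icc (0 : ℝ) 1)
    (q : ℝ → ℝ) (hq : ∀ u, q u = F (min 1 (u + σ)) - F u) :
    ∫ ω in {ω | (⨆ i, X i ω) - (⨅ i, X i ω) ≤ σ},
        ((1 : ℝ) / G) * ∑ i, X i ω ∂μ
      = ∫ u in (0 : ℝ)..1,
          f u * q u ^ (G - 2) *
            (u * q u + (G - 1) * ∫ x in u..(min 1 (u + σ)), x * f x) := by
  classical
  obtain ⟨n, rfl⟩ : ∃ n, G = n + 1 := ⟨G - 1, by omega⟩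
  have hn : 1 ≤ n := by omega
  set ν : Measure ℝ := volume.withDensity (fun x => ENNReal.ofReal (f x)) with hν
  haveI hνprob : IsProbabilityMeasure ν := by
    rw [← hlaw ⟨0, by omega⟩]
    exact Measure.isProbabilityMeasure_map (hXmeas _).aemeasurable
  have hsupp : ν (Set.Icc (0:ℝ) 1)ᶜ = 0 := by
    rw [hν, withDensity_apply _ measurableSet_Icc.compl]
    have h0 : ∀ᵐ x ∂(volume.restrict (Set.Icc (0:ℝ) 1)ᶜ),
        ENNReal.ofReal (f x) = 0 := by
      filter_upwards [ae_restrict_mem measurableSet_Icc.compl] with x hx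
      rw [hf_supp x hx, ENNReal.ofReal_zero]
    rw [lintegral_congr_ae h0, lintegral_zero]
  haveI : NullSingletonClass ν := by
    constructor
    intro u
    rw [hν, withDensity_apply _ (measurableSet_singleton u),
      Measure.restrict_eq_zero.mpr (measure_singleton u), lintegral_zero_measure]
  -- pushforward
  have hmap : Measure.map (fun ω i => X i ω) μ = Measure.pi fun _ : Fin (n+1) => ν :=
    resm_mapPi μ X hXmeas hindep ν hlaw
  set π : Measure (Fin (n+1) → ℝ) := Measure.pi fun _ => ν with hπ
  set T : Set (Fin (n+1) → ℝ) := {x | (⨆ i, x i) - ⨅ i, x i ≤ σ} with hT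
  have hTmeas : MeasurableSet T :=
    measurableSet_le ((Measurable.iSup fun i => measurable_pi_apply i).sub
      (Measurable.iInf fun i => measurable_pi_apply i)) measurable_const
  have hHmeas : Measurable fun x : Fin (n+1) → ℝ => (1 / (n+1:ℝ)) * ∑ i, x i :=
    measurable_const.mul (Finset.measurable_sum _ fun i _ => measurable_pi_apply i)
  have hLHS : ∫ ω in {ω | (⨆ i, X i ω) - (⨅ i, X i ω) ≤ σ},
        ((1 : ℝ) / (n+1)) * ∑ i, X i ω ∂μ
      = ∫ x in T, ((1 : ℝ) / (n+1)) * ∑ i, x i ∂π := by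
    rw [← hmap]
    exact (setIntegral_map hTmeas hHmeas.aestronglyMeasurable
      (measurable_pi_lambda _ hXmeas).aemeasurable).symm
  set A : Fin (n+1) → Set (Fin (n+1) → ℝ) :=
    fun i => {x | ∀ j, j ≠ i → x j ∈ Set.Ioc (x i) (x i + σ)} with hA
  have hAmeas : ∀ i, MeasurableSet (A i) := fun i => resm_Ameas σ i
  have hdisj : Pairwise (Function.onFun Disjoint A) := by
    intro i j hij
    rw [Function.onFun, Set.disjoint_left]
    intro x hxi hxj
    have h1 := (hxi j (Ne.symm hij)).1
    have h2 := (hxj i hij).1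
    linarith
  have hsub : ∀ i, A i ⊆ T := by
    intro i x hx
    have hub : ∀ j, x j ≤ x i + σ := by
      intro j
      by_cases hj : j = i
      · subst hj; linarith [hσ.1]
      · exact (hx j hj).2
    have hlb : ∀ j, x i ≤ x j := by
      intro j
      by_cases hj : j = i
      · subst hj; exact le_refl _
      · exact le_of_lt (hx j hj).1
    have h1 : (⨆ j, x j) ≤ x i + σ := ciSup_le hub
    have h2 : x i ≤ ⨅ j, x j := le_ciInf hlb
    show (⨆ j, x j) - ⨅ j, x j ≤ σ
    linarith
  set D : Set (Fin (n+1) → ℝ) :=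
    ⋃ (p : Fin (n+1) × Fin (n+1)), ⋃ (_ : p.2 ≠ p.1), {x | x p.1 = x p.2} with hD
  have hDnull : π D = 0 := by
    rw [hD]
    refine measure_iUnion_null fun p => measure_iUnion_null fun hp => ?_
    exact resm_diagNull ν hp
  have hTsub : T ⊆ (⋃ i, A i) ∪ D := by
    intro x hxT
    by_cases hDx : x ∈ D
    · exact Or.inr hDx
    · left
      have hne : ∀ i j : Fin (n+1), j ≠ i → x i ≠ x j := by
        intro i j hji hxe
        refine hDx ?_
        rw [hD]
        exact Set.mem_iUnion.2 ⟨(i, j), Set.mem_iUnion.2 ⟨hji, hxe⟩⟩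
      obtain ⟨i, -, hmin⟩ := Finset.exists_min_image Finset.univ x ⟨⟨0, by omega⟩,
        Finset.mem_univ _⟩
      refine Set.mem_iUnion.2 ⟨i, fun j hj => ?_⟩
      constructor
      · exact lt_of_le_of_ne (hmin j (Finset.mem_univ j)) (hne i j hj)
      · have h1 : x j ≤ ⨆ k, x k := le_ciSup (Set.Finite.bddAbove (Set.finite_range x)) j
        have h2 : (⨅ k, x k) ≤ x i := ciInf_le (Set.Finite.bddBelow (Set.finite_range x)) i
        have h3 : (⨆ k, x k) - ⨅ k, x k ≤ σ := hxT
        linarith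
  have hTae : T =ᵐ[π] ⋃ i, A i := by
    rw [MeasureTheory.ae_eq_set]
    constructor
    · refine measure_mono_null (fun x hx => ?_) hDnull
      rcases hTsub hx.1 with h | h
      · exact absurd h hx.2
      · exact h
    · have : (⋃ i, A i) \ T = ∅ := by
        rw [Set.diff_eq_empty]
        exact Set.iUnion_subset hsub
      rw [this]
      exact measure_empty
  -- integrability of the sample mean over π
  have haeIcc : ∀ᵐ x ∂π, ∀ j, x j ∈ Set.Icc (0:ℝ) 1 := by
    rw [ae_all_iff]
    intro j
    rw [ae_iff]
    have hset : {x : Fin (n+1) → ℝ | ¬ x j ∈ Set.Icc (0:ℝ) 1}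
        = Function.eval j ⁻¹' (Set.Icc (0:ℝ) 1)ᶜ := rfl
    rw [hset, hπ]
    exact Measure.pi_eval_preimage_null _ hsupp
  have hH_int : Integrable (fun x : Fin (n+1) → ℝ => (1/(n+1:ℝ)) * ∑ i, x i) π := by
    refine ⟨hHmeas.aestronglyMeasurable,
      HasFiniteIntegral.of_bounded (C := 1) ?_⟩
    filter_upwards [haeIcc] with x hx
    have hsum : |∑ i, x i| ≤ (n+1 : ℝ) := by
      calc |∑ i, x i| ≤ ∑ i, |x i| := Finset.abs_sum_le_sum_abs _ _
        _ ≤ ∑ _i : Fin (n+1), (1:ℝ) := Finset.sum_le_sum fun i _ => abs_le.2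
            ⟨by linarith [(hx i).1], (hx i).2⟩
        _ = (n+1 : ℝ) := by rw [Finset.sum_const, Finset.card_univ, Fintype.card_fin,
            nsmul_eq_mul, mul_one]; push_cast; ring
    rw [Real.norm_eq_abs, abs_mul, abs_div, abs_one]
    have hpos : (0:ℝ) < n + 1 := by positivity
    rw [abs_of_pos hpos]
    rw [div_mul_eq_mul_div, one_mul, div_le_one hpos]
    exact hsum
  simp only [show ((n+1:ℕ):ℝ) = (n:ℝ)+1 from by push_cast; ring]
  rw [hLHS, setIntegral_congr_set hTae,
    integral_iUnion hAmeas hdisj hH_int.integrableOn, tsum_fintype]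
  -- apply the key Fubini lemma to each piece
  have hterm : ∀ i : Fin (n+1), ∫ x in A i, (1/(n+1:ℝ)) * ∑ j, x j ∂π
      = (1/(n+1:ℝ)) * ∫ u, (u * ((ν (Set.Ioc u (u+σ))).toReal ^ n)
          + n * (∫ t in Set.Ioc u (u+σ), t ∂ν)
            * (ν (Set.Ioc u (u+σ))).toReal ^ (n-1)) ∂ν := by
    intro i
    rw [MeasureTheory.integral_const_mul, resm_keyFubini ν hsupp σ hσ.1 i]
  simp_rw [hterm]
  rw [Finset.sum_const, Finset.card_univ, Fintype.card_fin, nsmul_eq_mul]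
  have hne : ((n:ℝ) + 1) ≠ 0 := by positivity
  rw [show ((n+1 : ℕ) : ℝ) = (n:ℝ) + 1 by push_cast; ring, ← mul_assoc,
    mul_one_div_cancel hne, one_mul]
  -- Now: ∫ u, W u ∂ν = interval integral RHS
  have hν2 : ν = volume.withDensity (fun x => ((Real.toNNReal (f x) : ℝ≥0) : ℝ≥0∞)) := hν
  have hf_int : Integrable f volume := by
    have h1 : ∫⁻ x, ENNReal.ofReal (f x) = 1 := by
      have h := measure_univ (μ := ν)
      rwa [hν, withDensity_apply _ MeasurableSet.univ, Measure.restrict_univ] at h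
    refine ⟨hf_meas.aestronglyMeasurable, ?_⟩
    have h2 : ∫⁻ x, ‖f x‖ₑ = 1 := by
      rw [← h1]
      exact lintegral_congr fun x => Real.enorm_eq_ofReal (hf_nonneg x)
    unfold HasFiniteIntegral
    rw [h2]
    exact ENNReal.one_lt_top
  have hconv : ∀ W : ℝ → ℝ, ∫ u, W u ∂ν = ∫ u, f u * W u := by
    intro W
    rw [hν2, integral_withDensity_eq_integral_smul hf_meas.real_toNNReal]
    refine integral_congr_ae (Filter.Eventually.of_forall fun u => ?_)
    show (f u).toNNReal • W u = f u * W u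
    rw [NNReal.smul_def, Real.coe_toNNReal _ (hf_nonneg u), smul_eq_mul]
  rw [hconv]
  have hQ : ∀ a b : ℝ, (ν (Set.Ioc a b)).toReal = ∫ t in Set.Ioc a b, f t := by
    intro a b
    rw [hν, withDensity_apply _ measurableSet_Ioc,
      ← ofReal_integral_eq_lintegral_ofReal hf_int.integrableOn
        (Filter.Eventually.of_forall hf_nonneg),
      ENNReal.toReal_ofReal (setIntegral_nonneg measurableSet_Ioc fun t _ => hf_nonneg t)]
  have hM : ∀ a b : ℝ, (∫ t in Set.Ioc a b, t ∂ν) = ∫ t in Set.Ioc a b, t * f t := by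
    intro a b
    rw [hν2, restrict_withDensity measurableSet_Ioc,
      integral_withDensity_eq_integral_smul hf_meas.real_toNNReal]
    refine integral_congr_ae (Filter.Eventually.of_forall fun t => ?_)
    show (f t).toNNReal • t = t * f t
    rw [NNReal.smul_def, Real.coe_toNNReal _ (hf_nonneg t), smul_eq_mul]; ring
  have hInt_tf : ∀ a b : ℝ, IntegrableOn (fun t => t * f t) (Set.Ioc a b) volume := by
    intro a b
    refine Integrable.bdd_mul (c := max |a| |b|) hf_int.integrableOn
      measurable_id.aestronglyMeasurable ?_
    filter_upwards [ae_restrict_mem measurableSet_Ioc] with t ht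
    rw [Real.norm_eq_abs, abs_le]
    constructor
    · have := ht.1
      have h2 := neg_abs_le a
      have h3 := le_max_left |a| |b|
      linarith
    · have := ht.2
      have h2 := le_abs_self b
      have h3 := le_max_right |a| |b|
      linarith
  -- restrict the Lebesgue integral to Ioc 0 1
  set W : ℝ → ℝ := fun u => u * (ν (Set.Ioc u (u+σ))).toReal ^ n
      + (n:ℝ) * (∫ t in Set.Ioc u (u+σ), t ∂ν)
        * (ν (Set.Ioc u (u+σ))).toReal ^ (n-1) with hW
  have hrestrict : ∫ u, f u * W u = ∫ u in Set.Ioc (0:ℝ) 1, f u * W u := by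
    rw [← integral_indicator measurableSet_Ioc]
    refine integral_congr_ae ?_
    have h0 : ∀ᵐ u : ℝ, u ≠ (0:ℝ) := by
      rw [ae_iff]
      have hs : {a : ℝ | ¬ a ≠ 0} = {(0:ℝ)} := by ext a; simp
      rw [hs]
      exact measure_singleton 0
    filter_upwards [h0] with u hu
    by_cases hmem : u ∈ Set.Ioc (0:ℝ) 1
    · rw [Set.indicator_of_mem hmem]
    · rw [Set.indicator_of_notMem hmem]
      have hf0 : f u = 0 := by
        apply hf_supp
        simp only [Set.mem_Ioc, not_and_or, not_lt, not_le] at hmem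
        simp only [Set.mem_Icc, not_and_or, not_le]
        rcases hmem with h | h
        · left; rcases lt_or_eq_of_le h with h' | h'
          · exact h'
          · exact absurd h' hu
        · right; exact h
      rw [hf0, zero_mul]
  rw [hrestrict, intervalIntegral.integral_of_le (by norm_num : (0:ℝ) ≤ 1)]
  refine setIntegral_congr_fun measurableSet_Ioc fun u hu => ?_
  -- pointwise identity on Ioc 0 1
  obtain ⟨hu0, hu1⟩ := hu
  set b : ℝ := min 1 (u + σ) with hb
  have hub : u ≤ b := le_min hu1 (by linarith [hσ.1])
  have hbu : b ≤ u + σ := min_le_right _ _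
  have htail : ∀ h : ℝ → ℝ, (∀ t, t ∉ Set.Icc (0:ℝ) 1 → h t = 0) →
      ∫ t in Set.Ioc b (u+σ), h t = 0 := by
    intro h hh
    refine setIntegral_eq_zero_of_forall_eq_zero fun t ht => ?_
    rcases le_or_gt (u + σ) 1 with hc | hc
    · exfalso
      have : b = u + σ := min_eq_right hc
      rw [this] at ht
      exact absurd ht.2 (not_le.mpr ht.1)
    · have hb1 : b = 1 := min_eq_left hc.le
      apply hh
      rw [hb1] at ht
      simp only [Set.mem_Icc, not_and_or, not_le]
      right; exact ht.1
  have hsplitInt : ∀ h : ℝ → ℝ, IntegrableOn h (Set.Ioc u b) volume →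
      IntegrableOn h (Set.Ioc b (u+σ)) volume →
      ∫ t in Set.Ioc u (u+σ), h t = (∫ t in Set.Ioc u b, h t)
        + ∫ t in Set.Ioc b (u+σ), h t := by
    intro h h1 h2
    rw [← Set.Ioc_union_Ioc_eq_Ioc hub hbu,
      setIntegral_union (Set.Ioc_disjoint_Ioc_of_le le_rfl) measurableSet_Ioc h1 h2]
  have hQb : (ν (Set.Ioc u (u+σ))).toReal = q u := by
    rw [hQ, hsplitInt f hf_int.integrableOn hf_int.integrableOn,
      htail f hf_supp, add_zero, hq, hF, hF, ← hb,
      ← Set.Iic_union_Ioc_eq_Iic hub,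
      setIntegral_union (Set.Iic_disjoint_Ioc le_rfl) measurableSet_Ioc
        hf_int.integrableOn hf_int.integrableOn]
    ring
  have hMb : (∫ t in Set.Ioc u (u+σ), t ∂ν) = ∫ x in u..b, x * f x := by
    rw [hM, hsplitInt (fun t => t * f t) (hInt_tf u b) (hInt_tf b (u+σ)),
      htail (fun t => t * f t) (fun t ht => by show t * f t = 0; rw [hf_supp t ht, mul_zero]),
      add_zero, intervalIntegral.integral_of_le hub]
  rw [hW]
  simp only
  rw [hQb, hMb]
  have hexp : n + 1 - 2 = n - 1 := by omega
  have hn1 : n - 1 + 1 = n := by omega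
  rw [hexp, ← hn1, pow_succ]
  push_cast [hn1]
  ring
end
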